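/- arXiv:1906.09672 — 7 statements merged into one kernel-verified Lean document; each statement's English description precedes it below -/
import Mathlib

section
/- For every nonnegative measurable function f on (0,∞) and every p with 1 < p < ∞, the Hardy inequality holds: ∫₀^∞ ((1/x) ∫₀^x f(t) dt)^p dx ≤ (p/(p-1))^p ∫₀^∞ f(x)^p dx. -/
/-!
Let `q = p / (p - 1)`. Hölder's inequality on `(0, x]` with the weight `t ^ (1 / (p q))` gives
`((1/x) ∫₀^x f)^p ≤ q^(p-1) x^(-1-1/q) ∫₀^x f(t)^p t^(1/q) dt`. Integrating over `x` and
exchanging the order of integration, the inner integral `∫ₜ^∞ x^(-1-1/q) dx = q t^(-1/q)`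
cancels the weight `t^(1/q)`, leaving `q^p ∫₀^∞ f^p`.
-/

open MeasureTheory Set
open scoped ENNReal

lemma lintegral_Ioc_ofReal_rpow {b x : ℝ} (hb : -1 < b) (hx : 0 < x) :
    ∫⁻ t in Ioc 0 x, ENNReal.ofReal t ^ b = ENNReal.ofReal (x ^ (b + 1) / (b + 1)) := by
  have hint := (intervalIntegral.intervalIntegrable_rpow' (a := 0) (b := x) hb).1
  calc ∫⁻ t in Ioc 0 x, ENNReal.ofReal t ^ b = ∫⁻ t in Ioc 0 x, ENNReal.ofReal (t ^ b) :=
        setLIntegral_congr_fun measurableSet_Ioc fun t ht ↦ ENNReal.ofReal_rpow_of_pos ht.1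
    _ = ENNReal.ofReal (∫ t in Ioc 0 x, t ^ b) :=
        (ofReal_integral_eq_lintegral_ofReal hint <|
          (ae_restrict_mem measurableSet_Ioc).mono fun t ht ↦ Real.rpow_nonneg ht.1.le b).symm
    _ = _ := by
      rw [← intervalIntegral.integral_of_le hx.le, integral_rpow (Or.inl hb),
        Real.zero_rpow (by linarith), sub_zero]

lemma lintegral_Ioi_ofReal_rpow {b t : ℝ} (hb : b < -1) (ht : 0 < t) :
    ∫⁻ x in Ioi t, ENNReal.ofReal x ^ b = ENNReal.ofReal (-t ^ (b + 1) / (b + 1)) := by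
  calc ∫⁻ x in Ioi t, ENNReal.ofReal x ^ b = ∫⁻ x in Ioi t, ENNReal.ofReal (x ^ b) :=
        setLIntegral_congr_fun measurableSet_Ioi fun x hx ↦
          ENNReal.ofReal_rpow_of_pos (ht.trans hx)
    _ = ENNReal.ofReal (∫ x in Ioi t, x ^ b) :=
        (ofReal_integral_eq_lintegral_ofReal (integrableOn_Ioi_rpow_of_lt hb ht) <|
          (ae_restrict_mem measurableSet_Ioi).mono fun x hx ↦
            Real.rpow_nonneg (ht.trans hx).le b).symm
    _ = _ := by rw [integral_Ioi_rpow_of_lt hb ht]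

lemma rpow_lintegral_le_lintegral_mul_rpow_mul {α : Type*} [MeasurableSpace α] (μ : Measure α)
    {p q : ℝ} (hpq : p.HolderConjugate q) {f w : α → ℝ≥0∞} (hf : AEMeasurable f μ)
    (hw : AEMeasurable w μ) (hw0 : ∀ᵐ a ∂μ, w a ≠ 0) (hw_top : ∀ᵐ a ∂μ, w a ≠ ∞) :
    (∫⁻ a, f a ∂μ) ^ p ≤ (∫⁻ a, (f a * w a) ^ p ∂μ) * (∫⁻ a, (w a)⁻¹ ^ q ∂μ) ^ (p - 1) := by
  have hf_eq : ∫⁻ a, f a ∂μ = ∫⁻ a, ((f * w) * w⁻¹) a ∂μ := by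
    refine lintegral_congr_ae ?_
    filter_upwards [hw0, hw_top] with a ha0 ha_top
    simp [mul_assoc, ENNReal.mul_inv_cancel ha0 ha_top]
  calc (∫⁻ a, f a ∂μ) ^ p
      ≤ ((∫⁻ a, (f a * w a) ^ p ∂μ) ^ (1 / p) * (∫⁻ a, (w a)⁻¹ ^ q ∂μ) ^ (1 / q)) ^ p := by
        rw [hf_eq]
        exact ENNReal.rpow_le_rpow
          (ENNReal.lintegral_mul_le_Lp_mul_Lq μ hpq (hf.mul hw) hw.inv) hpq.nonneg
    _ = _ := by
        rw [ENNReal.mul_rpow_of_nonneg _ _ hpq.nonneg, ← ENNReal.rpow_mul, ← ENNReal.rpow_mul,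
          one_div_mul_cancel hpq.ne_zero, ENNReal.rpow_one, one_div_mul_eq_div,
          hpq.div_conj_eq_sub_one]

lemma rpow_lintegral_Ioc_le {p q : ℝ} (hpq : p.HolderConjugate q) {f : ℝ → ℝ≥0∞}
    (hf : AEMeasurable f) {x : ℝ} (hx : 0 < x) :
    (∫⁻ t in Ioc 0 x, f t) ^ p ≤ (∫⁻ t in Ioc 0 x, f t ^ p * ENNReal.ofReal t ^ q⁻¹) *
      (ENNReal.ofReal q * ENNReal.ofReal x ^ q⁻¹) ^ (p - 1) := by
  have hw : AEMeasurable (fun t : ℝ ↦ ENNReal.ofReal t ^ (p * q)⁻¹) :=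
    (measurable_id.ennreal_ofReal.pow_const _).aemeasurable
  have hpos : ∀ᵐ t ∂volume.restrict (Ioc 0 x), 0 < t :=
    (ae_restrict_mem measurableSet_Ioc).mono fun t ht ↦ ht.1
  have hholder := rpow_lintegral_le_lintegral_mul_rpow_mul (volume.restrict (Ioc 0 x)) hpq
    hf.restrict hw.restrict
    (hpos.mono fun t ht ↦ by simp [ENNReal.rpow_eq_zero_iff, ht, hpq.pos, hpq.symm.pos])
    (hpos.mono fun t ht ↦ by simp [ENNReal.rpow_eq_top_iff, ht, hpq.pos, hpq.symm.pos])
  have hp : (p * q)⁻¹ * p = q⁻¹ := by field_simp [hpq.ne_zero]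
  have hq : -((p * q)⁻¹ * q) = -p⁻¹ := by field_simp [hpq.symm.ne_zero]
  have hweight : ∫⁻ t in Ioc 0 x, (ENNReal.ofReal t ^ (p * q)⁻¹)⁻¹ ^ q =
      ENNReal.ofReal q * ENNReal.ofReal x ^ q⁻¹ := by
    simp_rw [← ENNReal.rpow_neg, ← ENNReal.rpow_mul, neg_mul, hq]
    rw [lintegral_Ioc_ofReal_rpow (by linarith [inv_lt_one_of_one_lt₀ hpq.lt]) hx,
      neg_add_eq_sub, hpq.one_sub_inv, div_inv_eq_mul, mul_comm,
      ENNReal.ofReal_mul hpq.symm.nonneg, ENNReal.ofReal_rpow_of_pos hx]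
  simpa only [hweight, ENNReal.mul_rpow_of_nonneg _ _ hpq.nonneg, ← ENNReal.rpow_mul, hp]
    using hholder

lemma rpow_average_Ioc_le {p q : ℝ} (hpq : p.HolderConjugate q) {f : ℝ → ℝ≥0∞}
    (hf : AEMeasurable f) {x : ℝ} (hx : 0 < x) :
    (ENNReal.ofReal (1 / x) * ∫⁻ t in Ioc 0 x, f t) ^ p ≤ ENNReal.ofReal q ^ (p - 1) *
      (ENNReal.ofReal x ^ (-1 - q⁻¹) * ∫⁻ t in Ioc 0 x, f t ^ p * ENNReal.ofReal t ^ q⁻¹) := by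
  have hx0 : ENNReal.ofReal x ≠ 0 := by simpa using hx
  have hexp : -p + q⁻¹ * (p - 1) = -1 - q⁻¹ := by
    rw [← hpq.one_sub_inv]
    linear_combination -inv_mul_cancel₀ hpq.ne_zero
  calc (ENNReal.ofReal (1 / x) * ∫⁻ t in Ioc 0 x, f t) ^ p
      = ENNReal.ofReal x ^ (-p) * (∫⁻ t in Ioc 0 x, f t) ^ p := by
        rw [ENNReal.mul_rpow_of_nonneg _ _ hpq.nonneg, one_div, ENNReal.ofReal_inv_of_pos hx,
          ENNReal.inv_rpow, ← ENNReal.rpow_neg]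
    _ ≤ ENNReal.ofReal x ^ (-p) * ((∫⁻ t in Ioc 0 x, f t ^ p * ENNReal.ofReal t ^ q⁻¹) *
          (ENNReal.ofReal q * ENNReal.ofReal x ^ q⁻¹) ^ (p - 1)) := by
        gcongr
        exact rpow_lintegral_Ioc_le hpq hf hx
    _ = _ := by
        rw [ENNReal.mul_rpow_of_nonneg _ _ hpq.sub_one_pos.le, ← ENNReal.rpow_mul, ← hexp,
          ENNReal.rpow_add _ _ hx0 ENNReal.ofReal_ne_top]
        ring

lemma lintegral_Ioi_mul_lintegral_Ioc {μ : Measure ℝ} [SFinite μ] {k g : ℝ → ℝ≥0∞}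
    (hk : Measurable k) (hg : Measurable g) (a : ℝ) :
    ∫⁻ x in Ioi a, k x * ∫⁻ t in Ioc a x, g t ∂μ ∂μ =
      ∫⁻ t in Ioi a, (∫⁻ x in Ici t, k x ∂μ) * g t ∂μ := by
  let F : ℝ → ℝ → ℝ≥0∞ := fun x t ↦ {z : ℝ × ℝ | z.2 ≤ z.1}.indicator (fun z ↦ k z.1 * g z.2) (x, t)
  have hF : Measurable (Function.uncurry F) :=
    ((hk.comp measurable_fst).mul (hg.comp measurable_snd)).indicator
      (measurableSet_le measurable_snd measurable_fst)
  calc ∫⁻ x in Ioi a, k x * ∫⁻ t in Ioc a x, g t ∂μ ∂μ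
      = ∫⁻ x in Ioi a, ∫⁻ t in Ioi a, F x t ∂μ ∂μ := by
        refine lintegral_congr fun x ↦ ?_
        have hFx : F x = (Iic x).indicator fun t ↦ k x * g t := by
          ext t; simp [F, indicator_apply]
        rw [hFx, lintegral_indicator measurableSet_Iic, Measure.restrict_restrict measurableSet_Iic,
          inter_comm, Ioi_inter_Iic, lintegral_const_mul _ hg]
    _ = ∫⁻ t in Ioi a, ∫⁻ x in Ioi a, F x t ∂μ ∂μ := lintegral_lintegral_swap hF.aemeasurable
    _ = ∫⁻ t in Ioi a, (∫⁻ x in Ici t, k x ∂μ) * g t ∂μ := by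
        refine setLIntegral_congr_fun measurableSet_Ioi fun t ht ↦ ?_
        have hFt : (F · t) = (Ici t).indicator fun x ↦ k x * g t := by
          ext x; simp [F, indicator_apply]
        rw [hFt, lintegral_indicator measurableSet_Ici, Measure.restrict_restrict measurableSet_Ici,
          inter_eq_left.mpr (Ici_subset_Ioi.mpr ht), lintegral_mul_const _ hk]

lemma lintegral_Ici_ofReal_rpow_mul {c t : ℝ} (hc : 0 < c) (ht : 0 < t) :
    (∫⁻ x in Ici t, ENNReal.ofReal x ^ (-1 - c)) * ENNReal.ofReal t ^ c = ENNReal.ofReal c⁻¹ := by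
  rw [← setLIntegral_congr Ioi_ae_eq_Ici, lintegral_Ioi_ofReal_rpow (by linarith) ht,
    show -1 - c + 1 = -c by ring, neg_div_neg_eq, div_eq_inv_mul,
    ENNReal.ofReal_mul (by positivity), ← ENNReal.ofReal_rpow_of_pos ht, mul_assoc,
    ← ENNReal.rpow_add _ _ (by simpa using ht) ENNReal.ofReal_ne_top, neg_add_cancel,
    ENNReal.rpow_zero, mul_one]

/-- Hardy's inequality: for every nonnegative measurable `f` on `(0,∞)` and `1 < p < ∞`,
`∫₀^∞ ((1/x) ∫₀^x f)^p dx ≤ (p/(p-1))^p ∫₀^∞ f^p`. -/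
theorem hardy_inequality (f : ℝ → ℝ≥0∞) (hf : Measurable f) (p : ℝ) (hp : 1 < p) :
    (∫⁻ x in Set.Ioi (0:ℝ),
        (ENNReal.ofReal (1/x) * ∫⁻ t in Set.Ioc (0:ℝ) x, f t) ^ p)
      ≤ ENNReal.ofReal (p / (p - 1)) ^ p * ∫⁻ x in Set.Ioi (0:ℝ), (f x) ^ p := by
  have hpq : p.HolderConjugate (p / (p - 1)) := Real.HolderConjugate.conjExponent hp
  set q := p / (p - 1)
  have hq0 : ENNReal.ofReal q ≠ 0 := by simpa using hpq.symm.pos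
  have hk : Measurable fun x : ℝ ↦ ENNReal.ofReal x ^ (-1 - q⁻¹) :=
    measurable_id.ennreal_ofReal.pow_const _
  have hg : Measurable fun t : ℝ ↦ f t ^ p * ENNReal.ofReal t ^ q⁻¹ :=
    (hf.pow_const p).mul (measurable_id.ennreal_ofReal.pow_const _)
  calc (∫⁻ x in Ioi 0, (ENNReal.ofReal (1 / x) * ∫⁻ t in Ioc 0 x, f t) ^ p)
      ≤ ∫⁻ x in Ioi 0, ENNReal.ofReal q ^ (p - 1) * (ENNReal.ofReal x ^ (-1 - q⁻¹) *
          ∫⁻ t in Ioc 0 x, f t ^ p * ENNReal.ofReal t ^ q⁻¹) :=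
        setLIntegral_mono' measurableSet_Ioi fun x hx ↦ rpow_average_Ioc_le hpq hf.aemeasurable hx
    _ = ENNReal.ofReal q ^ (p - 1) * ∫⁻ t in Ioi 0,
          (∫⁻ x in Ici t, ENNReal.ofReal x ^ (-1 - q⁻¹)) * (f t ^ p * ENNReal.ofReal t ^ q⁻¹) := by
        rw [lintegral_const_mul' _ _ (ENNReal.rpow_ne_top_of_nonneg hpq.sub_one_pos.le
          ENNReal.ofReal_ne_top), lintegral_Ioi_mul_lintegral_Ioc hk hg]
    _ = ENNReal.ofReal q ^ (p - 1) * ∫⁻ t in Ioi 0, ENNReal.ofReal q * f t ^ p := by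
        congr 1
        refine setLIntegral_congr_fun measurableSet_Ioi fun t ht ↦ ?_
        rw [mul_left_comm, lintegral_Ici_ofReal_rpow_mul (inv_pos.mpr hpq.symm.pos) ht, inv_inv,
          mul_comm]
    _ = ENNReal.ofReal q ^ (p - 1 + 1) * ∫⁻ t in Ioi 0, f t ^ p := by
        rw [lintegral_const_mul' _ _ ENNReal.ofReal_ne_top, ← mul_assoc,
          ENNReal.rpow_add _ _ hq0 ENNReal.ofReal_ne_top, ENNReal.rpow_one]
    _ = ENNReal.ofReal q ^ p * ∫⁻ t in Ioi 0, f t ^ p := by rw [sub_add_cancel]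
end

section
/- Let X be a Banach function space (Banach ideal space of measurable functions with the ideal property) on I = [0,1]. The Copson space C*X := {f : C*|f| ∈ X} is nontrivial (≠ {0}) if and only if there exists 0 < λ < 1 such that the indicator function χ_{[0,λ]} belongs to X. -/
open MeasureTheory Filter Set
open scoped ENNReal

noncomputable section

/-- A Banach function space (Banach ideal space) of measurable functions on `I ⊆ ℝ`,
with the ideal property. -/
structure BanachFunctionSpace (I : Set ℝ) where
  Mem : (ℝ → ℝ) → Prop
  norm : (ℝ → ℝ) → ℝ
  mem_congr : ∀ f g : ℝ → ℝ, (∀ᵐ x ∂(volume.restrict I), f x = g x) → Mem f → Mem g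
  zero_mem : Mem 0
  add_mem : ∀ f g, Mem f → Mem g → Mem (f + g)
  smul_mem : ∀ (c : ℝ) (f), Mem f → Mem (c • f)
  norm_nonneg : ∀ f, 0 ≤ norm f
  norm_zero : norm 0 = 0
  norm_eq_zero : ∀ f, Mem f → norm f = 0 → (∀ᵐ x ∂(volume.restrict I), f x = 0)
  norm_add_le : ∀ f g, Mem f → Mem g → norm (f + g) ≤ norm f + norm g
  norm_smul : ∀ (c : ℝ) (f), norm (c • f) = |c| * norm f
  ideal_mem : ∀ f g, (∀ᵐ x ∂(volume.restrict I), |f x| ≤ |g x|) → Mem g → Mem f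
  ideal_norm : ∀ f g, (∀ᵐ x ∂(volume.restrict I), |f x| ≤ |g x|) → Mem g → norm f ≤ norm g
  complete : ∀ f : ℕ → (ℝ → ℝ), (∀ n, Mem (f n)) →
      (∀ ε : ℝ, 0 < ε → ∃ N, ∀ m ≥ N, ∀ n ≥ N, norm (f m - f n) < ε) →
      ∃ g, Mem g ∧ Tendsto (fun n => norm (f n - g)) atTop (nhds 0)

/-- The Cesàro operator `Cf(x) = (1/x) ∫₀ˣ |f(t)| dt`, with values in `[0,∞]`. -/
def ces (f : ℝ → ℝ) (x : ℝ) : ℝ≥0∞ :=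
  ENNReal.ofReal (1/x) * ∫⁻ t in Set.Ioc (0:ℝ) x, ENNReal.ofReal |f t|

/-- The real-valued version of `C|f|`. -/
def cesR (f : ℝ → ℝ) : ℝ → ℝ := fun x => (ces f x).toReal

/-- The Copson operator `C*f(x) = ∫_{I ∩ [x,∞)} |f(t)|/t dt`, with values in `[0,∞]`. -/
def cop (I : Set ℝ) (f : ℝ → ℝ) (x : ℝ) : ℝ≥0∞ :=
  ∫⁻ t in I ∩ Set.Ici x, ENNReal.ofReal (|f t| / t)

/-- The real-valued version of `C*|f|`. -/
def copR (I : Set ℝ) (f : ℝ → ℝ) : ℝ → ℝ := fun x => (cop I f x).toReal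

/-- Membership in the Cesàro space `CX`: `C|f|` is a.e. finite on `I` and belongs to `X`. -/
def MemCX (I : Set ℝ) (X : BanachFunctionSpace I) (f : ℝ → ℝ) : Prop :=
  (∀ᵐ x ∂(volume.restrict I), ces f x ≠ ⊤) ∧ X.Mem (cesR f)

/-- Membership in the Copson space `C*X`. -/
def MemCopX (I : Set ℝ) (X : BanachFunctionSpace I) (f : ℝ → ℝ) : Prop :=
  (∀ᵐ x ∂(volume.restrict I), cop I f x ≠ ⊤) ∧ X.Mem (copR I f)

/-- Boundedness of the Cesàro operator on `X`. -/
def CBounded (I : Set ℝ) (X : BanachFunctionSpace I) : Prop :=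
  ∃ M : ℝ, ∀ f, X.Mem f → MemCX I X f ∧ X.norm (cesR f) ≤ M * X.norm f

/-!
If `f` is not a.e. zero, then `C*|f|` is positive at some `b > 0`; being decreasing and a.e.
finite, it is bounded below on some `[0, λ]`, `λ < b`, by `c = C*|f|(λ) ∈ (0, ∞)`, so that
`χ_{[0,λ]} ≤ c⁻¹ C*|f|` lies in `X` by the ideal property. Conversely, `f = χ_{[λ/2, λ]}` has
`C*f ≤ (λ/2) · (2/λ) = 1` everywhere and `C*f = 0` beyond `λ`, hence `C*f ≤ χ_{[0,λ]}` on `[0,1]`.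
-/

theorem cop_antitone (I : Set ℝ) (f : ℝ → ℝ) : Antitone (cop I f) := fun _ _ hxy =>
  lintegral_mono_set (inter_subset_inter_right _ (Ici_subset_Ici.mpr hxy))

theorem cop_eq_zero_of_forall_ge {I : Set ℝ} {f : ℝ → ℝ} {x : ℝ} (h : ∀ t ≥ x, f t = 0) :
    cop I f x = 0 := by
  refine le_antisymm ?_ zero_le
  calc cop I f x ≤ ∫⁻ t in Ici x, ENNReal.ofReal (|f t| / t) :=
        lintegral_mono_set inter_subset_right
    _ = ∫⁻ _ in Ici x, 0 := setLIntegral_congr_fun measurableSet_Ici fun t ht => by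
        simp [h t ht]
    _ = 0 := lintegral_zero

theorem cop_indicator_Icc_le (I : Set ℝ) {a b : ℝ} (ha : 0 < a) (x : ℝ) :
    cop I ((Icc a b).indicator fun _ => 1) x ≤ ENNReal.ofReal ((b - a) / a) := by
  have hle : ∀ t, ENNReal.ofReal (|(Icc a b).indicator (fun _ => (1:ℝ)) t| / t)
      ≤ (Icc a b).indicator (fun _ => ENNReal.ofReal (1 / a)) t := by
    intro t
    by_cases ht : t ∈ Icc a b
    · simpa [ht] using ENNReal.ofReal_le_ofReal (one_div_le_one_div_of_le ha ht.1)
    · simp [ht]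
  calc cop I ((Icc a b).indicator fun _ => 1) x
      ≤ ∫⁻ t, (Icc a b).indicator (fun _ => ENNReal.ofReal (1 / a)) t :=
        (setLIntegral_le_lintegral _ _).trans (lintegral_mono hle)
    _ = ENNReal.ofReal ((b - a) / a) := by
        rw [lintegral_indicator_const measurableSet_Icc, Real.volume_Icc,
          ← ENNReal.ofReal_mul (by positivity), one_div_mul_eq_div]

theorem ae_eq_zero_of_cop_eq_zero {I : Set ℝ} {f : ℝ → ℝ} (hf : Measurable f)
    (h : ∀ b > 0, cop I f b = 0) : ∀ᵐ t ∂volume.restrict (I ∩ Ioi 0), f t = 0 := by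
  have hunion : I ∩ Ioi 0 = ⋃ n : ℕ, I ∩ Ici (1 / ((n : ℝ) + 1)) := by
    rw [← inter_iUnion, iUnion_Ici_eq_Ioi_of_lt_of_tendsto (fun n => by positivity)
      tendsto_one_div_add_atTop_nhds_zero_nat]
  rw [hunion, ae_restrict_iUnion_iff]
  intro n
  have hb : (0 : ℝ) < 1 / ((n : ℝ) + 1) := by positivity
  have hzero := (lintegral_eq_zero_iff (hf.abs.div measurable_id).ennreal_ofReal).1 (h _ hb)
  filter_upwards [hzero, ae_restrict_of_ae_restrict_of_subset inter_subset_right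
    (ae_restrict_mem measurableSet_Ici)] with t ht htb
  have ht0 : 0 < t := hb.trans_le htb
  simpa [ENNReal.ofReal_eq_zero, div_le_iff₀ ht0] using ht

theorem indicator_Icc_mem_of_memCopX {I : Set ℝ} {X : BanachFunctionSpace I} {f : ℝ → ℝ}
    (hf : MemCopX I X f) {lam : ℝ} (hpos : 0 < cop I f lam) (hfin : cop I f lam ≠ ⊤) :
    X.Mem ((Icc 0 lam).indicator fun _ => (1:ℝ)) := by
  set c := (cop I f lam).toReal
  have hc : 0 < c := ENNReal.toReal_pos hpos.ne' hfin
  refine X.ideal_mem _ _ ?_ (X.smul_mem c⁻¹ _ hf.2)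
  -- `copR` is the junk value `0` where `cop` is `⊤`, which `hf.1` excludes a.e.
  filter_upwards [hf.1] with x hx
  have hnonneg : 0 ≤ c⁻¹ * copR I f x := mul_nonneg (inv_nonneg.2 hc.le) ENNReal.toReal_nonneg
  rw [abs_of_nonneg (indicator_nonneg (fun _ _ => zero_le_one) x), Pi.smul_apply, smul_eq_mul,
    abs_of_nonneg hnonneg]
  refine indicator_apply_le' (fun hxI => (one_le_inv_mul₀ hc).2 ?_) fun _ => hnonneg
  exact ENNReal.toReal_mono hx (cop_antitone I f hxI.2)

theorem memCopX_indicator_Icc_half {X : BanachFunctionSpace (Icc (0:ℝ) 1)} {lam : ℝ}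
    (hlam : 0 < lam) (hX : X.Mem ((Icc 0 lam).indicator fun _ => (1:ℝ))) :
    MemCopX (Icc 0 1) X ((Icc (lam / 2) lam).indicator fun _ => 1) := by
  have hle : ∀ x, cop (Icc 0 1) ((Icc (lam / 2) lam).indicator fun _ => 1) x ≤ 1 := by
    intro x
    convert cop_indicator_Icc_le (Icc 0 1) (half_pos hlam) x
    rw [show (lam - lam / 2) / (lam / 2) = 1 by field_simp; ring, ENNReal.ofReal_one]
  refine ⟨ae_of_all _ fun x => ((hle x).trans_lt ENNReal.one_lt_top).ne, X.ideal_mem _ _ ?_ hX⟩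
  filter_upwards [ae_restrict_mem measurableSet_Icc] with x hx
  rw [copR, abs_of_nonneg ENNReal.toReal_nonneg]
  rcases le_or_gt x lam with hxl | hxl
  · rw [indicator_of_mem (show x ∈ Icc 0 lam from ⟨hx.1, hxl⟩), abs_one]
    exact ENNReal.toReal_le_of_le_ofReal zero_le_one (by simpa using hle x)
  · rw [cop_eq_zero_of_forall_ge fun t ht =>
      indicator_of_notMem (fun h => (hxl.trans_le ht).not_ge h.2) _]
    simp

/-- Lemma 3.1: for a Banach function space `X` on `[0,1]`, the Copson space `C*X` is
nontrivial iff `χ_{[0,λ]} ∈ X` for some `0 < λ < 1`. -/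
theorem copson_nontrivial_iff (X : BanachFunctionSpace (Set.Icc (0:ℝ) 1)) :
    (∃ f : ℝ → ℝ, Measurable f ∧ MemCopX (Set.Icc (0:ℝ) 1) X f ∧
        ¬ (∀ᵐ x ∂(volume.restrict (Set.Icc (0:ℝ) 1)), f x = 0))
      ↔ ∃ lam : ℝ, 0 < lam ∧ lam < 1 ∧
          X.Mem ((Set.Icc (0:ℝ) lam).indicator fun _ => (1:ℝ)) := by
  constructor
  · rintro ⟨f, hf, hfX, hne⟩
    obtain ⟨b, hb0, hbpos⟩ : ∃ b > 0, 0 < cop (Icc 0 1) f b := by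
      by_contra! h
      have hIoc := ae_eq_zero_of_cop_eq_zero hf fun b hb => nonpos_iff_eq_zero.1 (h b hb)
      rw [show Icc (0:ℝ) 1 ∩ Ioi 0 = Ioc 0 1 by ext; simp; grind,
        Measure.restrict_congr_set Ioc_ae_eq_Icc] at hIoc
      exact hne hIoc
    obtain ⟨lam, ⟨hlam0, hlamb⟩, hfin⟩ : ∃ lam ∈ Ioo 0 (min b 1), cop (Icc 0 1) f lam ≠ ⊤ := by
      have : (ae (volume.restrict (Ioo (0:ℝ) (min b 1)))).NeBot :=
        ae_restrict_neBot.2 (by simp [hb0])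
      exact ((ae_restrict_mem measurableSet_Ioo).and (ae_restrict_of_ae_restrict_of_subset
        (Ioo_subset_Icc_self.trans (Icc_subset_Icc le_rfl (min_le_right _ _))) hfX.1)).exists
    exact ⟨lam, hlam0, hlamb.trans_le (min_le_right _ _), indicator_Icc_mem_of_memCopX hfX
      (hbpos.trans_le (cop_antitone _ _ (hlamb.le.trans (min_le_left _ _)))) hfin⟩
  · rintro ⟨lam, hlam0, hlam1, hX⟩
    refine ⟨_, measurable_const.indicator measurableSet_Icc, memCopX_indicator_Icc_half hlam0 hX,
      fun h => ?_⟩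
    have hnull : volume.restrict (Icc 0 1) (Icc (lam / 2) lam) = 0 :=
      measure_mono_null (fun x hx => by simpa using hx) (ae_iff.1 h)
    rw [Measure.restrict_apply measurableSet_Icc, inter_eq_self_of_subset_left
      (Icc_subset_Icc (half_pos hlam0).le hlam1.le), Real.volume_Icc,
      ENNReal.ofReal_eq_zero] at hnull
    linarith
end
end

section
/- Let X be a Banach function space on I (I = [0,1] or [0,∞)) such that the Cesàro space CX := {f : C|f| ∈ X} with norm ‖f‖_{CX} = ‖C|f|‖_X is nontrivial. Then there exist 0 < a < b < m(I) such that for all f ∈ CX with supp(f) ⊂ [a,b]: ‖(1/x)χ_{[b,m(I))}(x)‖_X · ‖f‖_{L¹} ≤ ‖f‖_{CX} ≤ ‖(1/x)χ_{[a,m(I))}(x)‖_X · ‖f‖_{L¹}. -/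
/-!
Take `f₀ ∈ CX` not a.e. zero. Some `a` in the interior of `I` has `c = ∫₀ᵃ |f₀| > 0`, and `c < ∞`
because `C|f₀|` is a.e. finite to the right of `a`. Then `(1/x)χ_{[a,m(I))} ≤ c⁻¹ C|f₀|`, so this
function lies in `X`. If `supp f ⊆ [a,b]`, then `C|f|(x) = ‖f‖₁/x` for `x ≥ b`, `C|f|(x) = 0` for
`x < a` and `C|f|(x) ≤ ‖f‖₁/x` everywhere; the ideal property of `X` turns these pointwise bounds
into the two norm inequalities.
-/

open MeasureTheory Filter Set
open scoped ENNReal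

noncomputable section

lemma exists_mem_of_ae_restrict {α : Type*} [MeasurableSpace α] {μ : Measure α} {s t : Set α}
    {p : α → Prop} (hp : ∀ᵐ x ∂μ.restrict s, p x) (hts : t ⊆ s) (ht : MeasurableSet t)
    (hμt : μ t ≠ 0) : ∃ x ∈ t, p x := by
  have : (ae (μ.restrict t)).NeBot := ae_neBot.2 (Measure.restrict_eq_zero.not.2 hμt)
  exact ((ae_restrict_mem ht).and (ae_restrict_of_ae_restrict_of_subset hts hp)).exists

lemma exists_setLIntegral_Ioc_ne_zero {U : Set ℝ} (hU : IsOpen U) (hU0 : U ⊆ Ioi 0)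
    {g : ℝ → ℝ≥0∞} (hg : ∫⁻ x in U, g x ≠ 0) : ∃ a ∈ U, ∫⁻ x in Ioc 0 a, g x ≠ 0 := by
  by_contra! h
  have hcover : U ⊆ ⋃ q : {q : ℚ // (q : ℝ) ∈ U}, Ioc 0 (q : ℝ) := by
    intro x hx
    obtain ⟨u, hxu, hu⟩ := exists_Ico_subset_of_mem_nhds (hU.mem_nhds hx) ⟨x + 1, by linarith⟩
    obtain ⟨q, hxq, hqu⟩ := exists_rat_btwn hxu
    exact mem_iUnion.2 ⟨⟨q, hu ⟨hxq.le, hqu⟩⟩, hU0 hx, hxq.le⟩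
  refine hg (le_antisymm ?_ zero_le)
  calc ∫⁻ x in U, g x ≤ ∫⁻ x in ⋃ q : {q : ℚ // (q : ℝ) ∈ U}, Ioc 0 (q : ℝ), g x :=
        lintegral_mono_set hcover
    _ ≤ ∑' q : {q : ℚ // (q : ℝ) ∈ U}, ∫⁻ x in Ioc 0 (q : ℝ), g x := lintegral_iUnion_le _ _
    _ = 0 := by simp [fun q : {q : ℚ // (q : ℝ) ∈ U} => h q q.2]

lemma setLIntegral_ofReal_abs_of_support_subset {f : ℝ → ℝ} {s : Set ℝ}
    (h : Function.support f ⊆ s) :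
    ∫⁻ t in s, ENNReal.ofReal |f t| = ∫⁻ t, ENNReal.ofReal |f t| :=
  setLIntegral_eq_of_support_subset fun t ht => h fun hf => ht (by simp [hf])

lemma cesR_eq {f : ℝ → ℝ} {x : ℝ} (hx : 0 ≤ x) :
    cesR f x = 1 / x * (∫⁻ t in Ioc 0 x, ENNReal.ofReal |f t|).toReal := by
  rw [cesR, ces, ENNReal.toReal_mul, ENNReal.toReal_ofReal (by positivity)]

lemma setLIntegral_Ioc_ne_top_of_ces_ne_top {f : ℝ → ℝ} {x : ℝ} (hx : 0 < x)
    (h : ces f x ≠ ⊤) : ∫⁻ t in Ioc 0 x, ENNReal.ofReal |f t| ≠ ⊤ := by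
  contrapose! h
  rw [ces, h]
  exact ENNReal.mul_top (by simpa using hx)

lemma setLIntegral_Ioc_ne_top_of_ae_ces_ne_top {f : ℝ → ℝ} {s : Set ℝ} {a u : ℝ}
    (h : ∀ᵐ x ∂volume.restrict s, ces f x ≠ ⊤) (ha : 0 ≤ a) (hau : a < u) (hs : Ioo a u ⊆ s) :
    ∫⁻ t in Ioc 0 a, ENNReal.ofReal |f t| ≠ ⊤ := by
  obtain ⟨x, hx, hfx⟩ := exists_mem_of_ae_restrict h hs measurableSet_Ioo (by simpa using hau)
  exact ne_top_of_le_ne_top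
    (setLIntegral_Ioc_ne_top_of_ces_ne_top (ha.trans_lt hx.1) hfx)
    (lintegral_mono_set (Ioc_subset_Ioc_right hx.1.le))

namespace BanachFunctionSpace

variable {I : Set ℝ} (X : BanachFunctionSpace I)

lemma norm_le_mul_norm {f g : ℝ → ℝ} {c : ℝ} (hc : 0 ≤ c) (hg : X.Mem g)
    (h : ∀ᵐ x ∂volume.restrict I, |f x| ≤ c * |g x|) : X.norm f ≤ c * X.norm g := by
  have := X.ideal_norm f (c • g) (by simpa [abs_mul, abs_of_nonneg hc] using h)
    (X.smul_mem c g hg)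
  rwa [X.norm_smul, abs_of_nonneg hc] at this

lemma mul_norm_le_norm {f g : ℝ → ℝ} {c : ℝ} (hc : 0 ≤ c) (hg : X.Mem g)
    (h : ∀ᵐ x ∂volume.restrict I, c * |f x| ≤ |g x|) : c * X.norm f ≤ X.norm g := by
  have := X.ideal_norm (c • f) g (by simpa [abs_mul, abs_of_nonneg hc] using h) hg
  rwa [X.norm_smul, abs_of_nonneg hc] at this

end BanachFunctionSpace

section CesaroEstimates

variable {I : Set ℝ} (X : BanachFunctionSpace I) {f : ℝ → ℝ}

lemma mem_indicator_one_div_of_memCX (hf : MemCX I X f) {a : ℝ} (ha : 0 < a)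
    (hfa : 0 < (∫⁻ t in Ioc 0 a, ENNReal.ofReal |f t|).toReal) :
    X.Mem ((I ∩ Ici a).indicator fun x => 1 / x) := by
  set c := (∫⁻ t in Ioc 0 a, ENNReal.ofReal |f t|).toReal
  refine X.ideal_mem _ (c⁻¹ • cesR f) ?_ (X.smul_mem _ _ hf.2)
  filter_upwards [hf.1] with x hx
  by_cases hxa : x ∈ I ∩ Ici a
  swap
  · simp only [indicator_of_notMem hxa, abs_zero]
    exact abs_nonneg _
  have hx0 : 0 < x := ha.trans_le hxa.2
  have hca : c ≤ (∫⁻ t in Ioc 0 x, ENNReal.ofReal |f t|).toReal :=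
    ENNReal.toReal_mono (setLIntegral_Ioc_ne_top_of_ces_ne_top hx0 hx)
      (lintegral_mono_set (Ioc_subset_Ioc_right hxa.2))
  rw [indicator_of_mem hxa, Pi.smul_apply, smul_eq_mul, cesR_eq hx0.le, abs_of_pos (one_div_pos.2 hx0),
    abs_of_nonneg (by positivity), le_inv_mul_iff₀ hfa]
  rw [mul_comm c]
  gcongr

lemma norm_indicator_mul_le_norm_cesR (hf : X.Mem (cesR f)) {b : ℝ} (hb : 0 < b)
    (hsupp : Function.support f ⊆ Ioc 0 b) :
    X.norm ((I ∩ Ici b).indicator fun x => 1 / x) * (∫⁻ t, ENNReal.ofReal |f t|).toReal ≤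
      X.norm (cesR f) := by
  rw [mul_comm]
  refine X.mul_norm_le_norm ENNReal.toReal_nonneg hf (Eventually.of_forall fun x => ?_)
  by_cases hx : x ∈ I ∩ Ici b
  · have hx0 : 0 < x := hb.trans_le hx.2
    rw [indicator_of_mem hx, cesR_eq hx0.le, setLIntegral_ofReal_abs_of_support_subset
      (hsupp.trans (Ioc_subset_Ioc_right hx.2)), abs_of_pos (one_div_pos.2 hx0), mul_comm]
    exact le_abs_self _
  · simp [indicator_of_notMem hx]

lemma norm_cesR_le_norm_indicator_mul (hI : MeasurableSet I) {a : ℝ}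
    (hmem : X.Mem ((I ∩ Ici a).indicator fun x => 1 / x)) (ha : 0 < a)
    (hsupp : Function.support f ⊆ Ici a) (hf : ∫⁻ t, ENNReal.ofReal |f t| ≠ ⊤) :
    X.norm (cesR f) ≤
      X.norm ((I ∩ Ici a).indicator fun x => 1 / x) * (∫⁻ t, ENNReal.ofReal |f t|).toReal := by
  rw [mul_comm]
  refine X.norm_le_mul_norm ENNReal.toReal_nonneg hmem ?_
  filter_upwards [ae_restrict_mem hI] with x hxI
  rcases lt_or_ge x a with hxa | hax
  · have hzero : ∫⁻ t in Ioc 0 x, ENNReal.ofReal |f t| = 0 :=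
      setLIntegral_eq_zero measurableSet_Ioc fun t ht => by
        have : f t = 0 := Function.notMem_support.1 fun h => (ht.2.trans_lt hxa).not_ge (hsupp h)
        simp [this]
    simp only [cesR, ces, hzero, mul_zero, ENNReal.toReal_zero, abs_zero]
    positivity
  · have hx0 : 0 < x := ha.trans_le hax
    rw [indicator_of_mem (show x ∈ I ∩ Ici a from ⟨hxI, hax⟩), cesR_eq hx0.le, abs_of_pos (one_div_pos.2 hx0),
      abs_of_nonneg (by positivity), mul_comm]
    exact mul_le_mul_of_nonneg_right (ENNReal.toReal_mono hf (setLIntegral_le_lintegral _ _))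
      (by positivity)

end CesaroEstimates

lemma interior_ae_eq_of_eq_Icc_or_Ici {I : Set ℝ} (hI : I = Icc 0 1 ∨ I = Ici 0) :
    interior I =ᵐ[volume] I := by
  refine interior_ae_eq_of_null_frontier (Set.Finite.measure_zero ?_ _)
  rcases hI with rfl | rfl
  · simp [frontier_Icc zero_le_one]
  · simp

/-- Lemma 4.1: if `CX ≠ {0}`, there are `0 < a < b < m(I)` such that for all `f ∈ CX`
supported in `[a,b]`:
`‖(1/x)χ_{[b,m(I))}‖_X ‖f‖_{L¹} ≤ ‖f‖_{CX} ≤ ‖(1/x)χ_{[a,m(I))}‖_X ‖f‖_{L¹}`. -/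
theorem cesaro_middle_L1 (I : Set ℝ) (hI : I = Set.Icc 0 1 ∨ I = Set.Ici 0)
    (X : BanachFunctionSpace I)
    (hne : ∃ f : ℝ → ℝ, Measurable f ∧ MemCX I X f ∧
        ¬ (∀ᵐ x ∂(volume.restrict I), f x = 0)) :
    ∃ a b : ℝ, 0 < a ∧ a < b ∧ b ∈ interior I ∧
      X.Mem ((I ∩ Set.Ici a).indicator fun x => 1/x) ∧
      X.Mem ((I ∩ Set.Ici b).indicator fun x => 1/x) ∧
      ∀ f : ℝ → ℝ, Measurable f → MemCX I X f → Function.support f ⊆ Set.Icc a b →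
        X.norm ((I ∩ Set.Ici b).indicator fun x => 1/x) *
            (∫⁻ t in I, ENNReal.ofReal |f t|).toReal ≤ X.norm (cesR f) ∧
        X.norm (cesR f) ≤
          X.norm ((I ∩ Set.Ici a).indicator fun x => 1/x) *
            (∫⁻ t in I, ENNReal.ofReal |f t|).toReal := by
  obtain ⟨f₀, hf₀m, hf₀, hf₀ne⟩ := hne
  have hIm : MeasurableSet I := by rcases hI with rfl | rfl <;> measurability
  have hI0 : interior I ⊆ Ioi 0 := by
    rcases hI with rfl | rfl
    · simpa using Ioo_subset_Ioi_self
    · simp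
  have hf₀I : ∫⁻ x in interior I, ENNReal.ofReal |f₀ x| ≠ 0 := by
    rw [setLIntegral_congr (interior_ae_eq_of_eq_Icc_or_Ici hI), Ne,
      lintegral_eq_zero_iff (by fun_prop)]
    refine fun h => hf₀ne ?_
    filter_upwards [h] with x hx
    simpa using hx
  obtain ⟨a, haI, hf₀a⟩ := exists_setLIntegral_Ioc_ne_zero isOpen_interior hI0 hf₀I
  have ha : 0 < a := hI0 haI
  obtain ⟨u, hau, hIu⟩ :=
    exists_Ico_subset_of_mem_nhds (isOpen_interior.mem_nhds haI) ⟨a + 1, lt_add_one a⟩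
  obtain ⟨b, hab, hbu⟩ := exists_between hau
  have hmem_a := mem_indicator_one_div_of_memCX X hf₀ ha <| ENNReal.toReal_pos hf₀a <|
    setLIntegral_Ioc_ne_top_of_ae_ces_ne_top hf₀.1 ha.le hau
      (Ioo_subset_Ico_self.trans (hIu.trans interior_subset))
  refine ⟨a, b, ha, hab, hIu ⟨hab.le, hbu⟩, hmem_a,
    X.ideal_mem _ _ (Eventually.of_forall fun x => ?_) hmem_a, fun f _ hf hsupp => ?_⟩
  · simpa only [Real.norm_eq_abs] using
      norm_indicator_le_of_subset (inter_subset_inter_right I (Ici_subset_Ici.2 hab.le))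
        (fun x : ℝ => 1 / x) x
  have hsuppb : Function.support f ⊆ Ioc 0 b := hsupp.trans fun x hx => ⟨ha.trans_le hx.1, hx.2⟩
  have hfL1 : ∫⁻ t, ENNReal.ofReal |f t| ≠ ⊤ := by
    rw [← setLIntegral_ofReal_abs_of_support_subset hsuppb]
    exact setLIntegral_Ioc_ne_top_of_ae_ces_ne_top hf.1 (ha.trans hab).le hbu
      (fun x hx => interior_subset (hIu ⟨(hab.trans hx.1).le, hx.2⟩))
  rw [setLIntegral_ofReal_abs_of_support_subset
    (hsupp.trans fun x hx => interior_subset (hIu ⟨hx.1, hx.2.trans_lt hbu⟩))]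
  exact ⟨norm_indicator_mul_le_norm_cesR X hf.2 (ha.trans hab) hsuppb,
    norm_cesR_le_norm_indicator_mul X hIm hmem_a ha (hsupp.trans Icc_subset_Ici_self) hfL1⟩
end
end

section
/- Let X be a Banach function space on [0,∞) such that (1/x)χ_{(1,∞)}(x) ∈ X. Then for f ∈ L⁰[0,1], f belongs to CX[0,∞)|_{[0,1]} (i.e., C(|f|χ_{[0,1]}) ∈ X[0,∞)) if and only if f ∈ C(X[0,∞)|_{[0,1]}) ∩ L¹[0,1], with equivalence of norms: max{‖(C|f|)χ_{(0,1]}‖_X, ‖(1/x)χ_{(1,∞)}(x)‖_X‖f‖_{L¹}} ≤ ‖C(|f|χ_{[0,1]})‖_X ≤ ‖(C|f|)χ_{(0,1]}‖_X + ‖(1/x)χ_{(1,∞)}(x)‖_X‖f‖_{L¹}. -/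
open MeasureTheory Filter Set
open scoped ENNReal

noncomputable section

/-!
For `f` supported in `[0,1]`, `C|f|` vanishes on `(-∞,0]` and equals `‖f‖₁ / x` on `(1,∞)`, so
`C|f| = (C|f|)χ_{(0,1]} + ‖f‖₁ · (1/x)χ_{(1,∞)}`. Both summands are dominated by `C|f|`, which
gives the lower bound by the ideal property and the upper bound by the triangle inequality.
If `‖f‖₁ = ∞` then `C|f| = ∞` on all of `(1,∞)`, a set of positive measure, so a.e. finiteness
of `C|f|` forces `f ∈ L¹[0,1]`.
-/

namespace BanachFunctionSpace

variable {I : Set ℝ} (X : BanachFunctionSpace I) {g : ℝ → ℝ}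

theorem mem_indicator (hg : X.Mem g) (s : Set ℝ) : X.Mem (s.indicator g) :=
  X.ideal_mem _ _ (ae_of_all _ fun _ => norm_indicator_le_norm_self g _) hg

theorem norm_indicator_le (hg : X.Mem g) (s : Set ℝ) : X.norm (s.indicator g) ≤ X.norm g :=
  X.ideal_norm _ _ (ae_of_all _ fun _ => norm_indicator_le_norm_self g _) hg

end BanachFunctionSpace

theorem ces_of_nonpos (f : ℝ → ℝ) {x : ℝ} (hx : x ≤ 0) : ces f x = 0 := by
  simp [ces, Ioc_eq_empty (not_lt.2 hx)]

theorem cesR_eq_indicator_Ioc_add_indicator_Ioi (f : ℝ → ℝ) :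
    cesR f = (Ioc 0 1).indicator (cesR f) + (Ioi 1).indicator (cesR f) := by
  have hsupp : Function.support (cesR f) ⊆ Ioi 0 := fun x hx => by
    by_contra hx0
    exact hx (by simp [cesR, ces_of_nonpos f (not_lt.1 hx0)])
  calc cesR f = (Ioi 0).indicator (cesR f) := (indicator_eq_self.2 hsupp).symm
    _ = _ := by
      rw [← Ioc_union_Ioi_eq_Ioi zero_le_one, indicator_union_of_disjoint Ioc_disjoint_Ioi_same]
      rfl

section SupportedInUnitInterval

variable {f : ℝ → ℝ} (hsupp : Function.support f ⊆ Icc 0 1)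
include hsupp

theorem setLIntegral_Ioc_eq_of_one_le {x : ℝ} (hx : 1 ≤ x) :
    ∫⁻ t in Ioc 0 x, ENNReal.ofReal |f t| = ∫⁻ t in Icc 0 1, ENNReal.ofReal |f t| := by
  have hsupp' : (Function.support fun t => ENNReal.ofReal |f t|) ⊆ Icc 0 1 := fun t ht =>
    hsupp fun h => ht (by simp [h])
  rw [Measure.restrict_congr_set Ioc_ae_eq_Icc,
    setLIntegral_eq_of_support_subset (hsupp'.trans (Icc_subset_Icc_right hx)),
    setLIntegral_eq_of_support_subset hsupp']

theorem ces_of_one_lt {x : ℝ} (hx : 1 < x) :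
    ces f x = ENNReal.ofReal (1 / x) * ∫⁻ t in Icc 0 1, ENNReal.ofReal |f t| := by
  rw [ces, setLIntegral_Ioc_eq_of_one_le hsupp hx.le]

theorem indicator_Ioi_one_cesR :
    (Ioi 1).indicator (cesR f) =
      (∫⁻ t in Icc 0 1, ENNReal.ofReal |f t|).toReal • (Ioi 1).indicator fun x => 1 / x := by
  ext x
  by_cases hx : x ∈ Ioi 1
  · have hx0 : 0 ≤ x := zero_le_one.trans (mem_Ioi.1 hx).le
    simp [hx, cesR, ces_of_one_lt hsupp hx, ENNReal.toReal_mul, hx0, mul_comm]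
  · simp [hx]

theorem lintegral_ne_top_of_ae_ces_ne_top
    (hfin : ∀ᵐ x ∂volume.restrict (Ici 0), ces f x ≠ ⊤) :
    ∫⁻ t in Icc 0 1, ENNReal.ofReal |f t| ≠ ⊤ := by
  intro hL
  have : (ae (volume.restrict (Ioi (1 : ℝ)))).NeBot :=
    ae_neBot.2 (by simp [Measure.restrict_eq_zero])
  obtain ⟨x, hx, hx1⟩ := ((ae_restrict_of_ae_restrict_of_subset
    (Ioi_subset_Ici zero_le_one) hfin).and (ae_restrict_mem measurableSet_Ioi)).exists
  exact hx (by simp [ces_of_one_lt hsupp hx1, hL, zero_lt_one.trans (mem_Ioi.1 hx1)])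

theorem ae_ces_ne_top {μ : Measure ℝ} (hL : ∫⁻ t in Icc 0 1, ENNReal.ofReal |f t| ≠ ⊤)
    (hfin : ∀ᵐ x ∂μ, x ∈ Ioc 0 1 → ces f x ≠ ⊤) : ∀ᵐ x ∂μ, ces f x ≠ ⊤ := by
  filter_upwards [hfin] with x hx
  rcases le_or_gt x 0 with hx0 | hx0
  · simp [ces_of_nonpos f hx0]
  rcases le_or_gt x 1 with hx1 | hx1
  · exact hx ⟨hx0, hx1⟩
  · rw [ces_of_one_lt hsupp hx1]
    exact ENNReal.mul_ne_top ENNReal.ofReal_ne_top hL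

end SupportedInUnitInterval

theorem cesaro_truncation_general (X : BanachFunctionSpace (Set.Ici (0:ℝ)))
    (hind : X.Mem ((Set.Ioi (1:ℝ)).indicator fun x => 1/x))
    (f : ℝ → ℝ) (hsupp : Function.support f ⊆ Set.Icc 0 1) :
    (MemCX (Set.Ici 0) X f ↔
      ((∀ᵐ x ∂(volume.restrict (Set.Ici (0:ℝ))), x ∈ Set.Ioc (0:ℝ) 1 → ces f x ≠ ⊤) ∧
        X.Mem ((Set.Ioc (0:ℝ) 1).indicator (cesR f)) ∧
        (∫⁻ t in Set.Icc (0:ℝ) 1, ENNReal.ofReal |f t|) ≠ ⊤)) ∧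
    (MemCX (Set.Ici 0) X f →
      (max (X.norm ((Set.Ioc (0:ℝ) 1).indicator (cesR f)))
          (X.norm ((Set.Ioi (1:ℝ)).indicator fun x => 1/x) *
            (∫⁻ t in Set.Icc (0:ℝ) 1, ENNReal.ofReal |f t|).toReal)
        ≤ X.norm (cesR f)) ∧
      X.norm (cesR f) ≤
        X.norm ((Set.Ioc (0:ℝ) 1).indicator (cesR f)) +
          X.norm ((Set.Ioi (1:ℝ)).indicator fun x => 1/x) *
            (∫⁻ t in Set.Icc (0:ℝ) 1, ENNReal.ofReal |f t|).toReal) := by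
  set L := ∫⁻ t in Icc 0 1, ENNReal.ofReal |f t|
  have hdec :
      cesR f = (Ioc 0 1).indicator (cesR f) + L.toReal • (Ioi 1).indicator fun x => 1 / x :=
    indicator_Ioi_one_cesR hsupp ▸ cesR_eq_indicator_Ioc_add_indicator_Ioi f
  have hnorm_tail : X.norm ((Ioi 1).indicator fun x => 1 / x) * L.toReal =
      X.norm ((Ioi 1).indicator (cesR f)) := by
    rw [indicator_Ioi_one_cesR hsupp, X.norm_smul, abs_of_nonneg ENNReal.toReal_nonneg, mul_comm]
  refine ⟨⟨?_, ?_⟩, fun ⟨_, hmem⟩ => ⟨?_, ?_⟩⟩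
  · rintro ⟨hfin, hmem⟩
    exact ⟨hfin.mono fun x hx _ => hx, X.mem_indicator hmem _,
      lintegral_ne_top_of_ae_ces_ne_top hsupp hfin⟩
  · rintro ⟨hfin, hmem, hL⟩
    exact ⟨ae_ces_ne_top hsupp hL hfin, hdec ▸ X.add_mem _ _ hmem (X.smul_mem _ _ hind)⟩
  · exact max_le (X.norm_indicator_le hmem _) (hnorm_tail ▸ X.norm_indicator_le hmem _)
  · calc X.norm (cesR f)
        = X.norm ((Ioc 0 1).indicator (cesR f) + L.toReal • (Ioi 1).indicator fun x => 1 / x) :=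
          congrArg X.norm hdec
      _ ≤ _ := X.norm_add_le _ _ (X.mem_indicator hmem _) (X.smul_mem _ _ hind)
      _ = _ := by rw [X.norm_smul, abs_of_nonneg ENNReal.toReal_nonneg, mul_comm]

/-- For `X` a Banach function space on `[0,∞)` with `(1/x)χ_{(1,∞)} ∈ X` and `f` supported
in `[0,1]`: `f ∈ CX[0,∞)|_{[0,1]}` iff `f ∈ C(X[0,∞)|_{[0,1]}) ∩ L¹[0,1]`, with the stated
equivalence of norms. -/
theorem cesaro_truncation (X : BanachFunctionSpace (Set.Ici (0:ℝ)))
    (hind : X.Mem ((Set.Ioi (1:ℝ)).indicator fun x => 1/x))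
    (f : ℝ → ℝ) (hf : Measurable f) (hsupp : Function.support f ⊆ Set.Icc 0 1) :
    (MemCX (Set.Ici 0) X f ↔
      ((∀ᵐ x ∂(volume.restrict (Set.Ici (0:ℝ))), x ∈ Set.Ioc (0:ℝ) 1 → ces f x ≠ ⊤) ∧
        X.Mem ((Set.Ioc (0:ℝ) 1).indicator (cesR f)) ∧
        (∫⁻ t in Set.Icc (0:ℝ) 1, ENNReal.ofReal |f t|) ≠ ⊤)) ∧
    (MemCX (Set.Ici 0) X f →
      (max (X.norm ((Set.Ioc (0:ℝ) 1).indicator (cesR f)))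
          (X.norm ((Set.Ioi (1:ℝ)).indicator fun x => 1/x) *
            (∫⁻ t in Set.Icc (0:ℝ) 1, ENNReal.ofReal |f t|).toReal)
        ≤ X.norm (cesR f)) ∧
      X.norm (cesR f) ≤
        X.norm ((Set.Ioc (0:ℝ) 1).indicator (cesR f)) +
          X.norm ((Set.Ioi (1:ℝ)).indicator fun x => 1/x) *
            (∫⁻ t in Set.Icc (0:ℝ) 1, ENNReal.ofReal |f t|).toReal) :=
  cesaro_truncation_general X hind f hsupp
end
end

section
/- The function f(x) = 1/(1−x) on [0,1) satisfies ∫₀¹ ((1/x) ln(1/(1−x)))^q dx < ∞ for every 1 < q < ∞, while f ∉ L¹[0,1]. Consequently Cf ∈ L^q[0,1] for all 1 < q < ∞ although f ∉ L¹[0,1]. -/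
/-!
Write `L x = log (1 / (1 - x))`. From `log t ≤ t - 1` we get `L x ≤ x / (1 - x)`, so the Cesàro
mean `L x / x` is at most `2` on `(0, 1/2]`, and at most `2 L x` on `[1/2, 1)`. Since
`log y ≤ y ^ ε / ε`, the choice `ε = 1 / (2q)` gives `(L x / x) ^ q ≤ C (1 - x) ^ (-1/2)`, which is
integrable. On the other hand `1 / (1 - x)` is the reflection of `1 / x`, which is not integrable
at `0`.
-/

open MeasureTheory Set

lemma one_add_log_le_mul_rpow {y ε : ℝ} (hy : 1 ≤ y) (hε : 0 < ε) :
    1 + Real.log y ≤ (1 + 1 / ε) * y ^ ε := by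
  have hlog : Real.log y ≤ y ^ ε / ε := Real.log_le_rpow_div (by linarith) hε
  have hone : 1 ≤ y ^ ε := Real.one_le_rpow hy hε.le
  calc 1 + Real.log y ≤ y ^ ε + y ^ ε / ε := by gcongr
    _ = (1 + 1 / ε) * y ^ ε := by ring

lemma one_le_one_div_one_sub {x : ℝ} (hx0 : 0 ≤ x) (hx1 : x < 1) : 1 ≤ 1 / (1 - x) := by
  rw [le_div_iff₀ (by linarith)]
  linarith

lemma log_one_div_one_sub_le {x : ℝ} (hx : x < 1) :
    Real.log (1 / (1 - x)) ≤ x / (1 - x) := by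
  have hu : 0 < 1 - x := by linarith
  calc Real.log (1 / (1 - x)) ≤ 1 / (1 - x) - 1 := Real.log_le_sub_one_of_pos (by positivity)
    _ = x / (1 - x) := by field_simp; ring

section CesaroMean

variable {x : ℝ}

lemma div_mul_log_one_div_one_sub_nonneg (hx : x ∈ Ioo (0 : ℝ) 1) :
    0 ≤ (1 / x) * Real.log (1 / (1 - x)) :=
  mul_nonneg (one_div_pos.2 hx.1).le
    (Real.log_nonneg (one_le_one_div_one_sub hx.1.le hx.2))

lemma div_mul_log_one_div_one_sub_le (hx : x ∈ Ioo (0 : ℝ) 1) :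
    (1 / x) * Real.log (1 / (1 - x)) ≤ 2 * (1 + Real.log (1 / (1 - x))) := by
  obtain ⟨hx0, hx1⟩ := hx
  have hu : 0 < 1 - x := by linarith
  have hL : 0 ≤ Real.log (1 / (1 - x)) := Real.log_nonneg (one_le_one_div_one_sub hx0.le hx1)
  rcases le_or_gt x (1 / 2) with hsmall | hlarge
  · calc (1 / x) * Real.log (1 / (1 - x)) ≤ (1 / x) * (x / (1 - x)) := by
          gcongr; exact log_one_div_one_sub_le hx1
      _ = 1 / (1 - x) := by field_simp
      _ ≤ 2 := by rw [div_le_iff₀ hu]; linarith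
      _ ≤ 2 * (1 + Real.log (1 / (1 - x))) := by linarith
  · calc (1 / x) * Real.log (1 / (1 - x)) ≤ 2 * Real.log (1 / (1 - x)) := by
          gcongr; rw [div_le_iff₀ hx0]; linarith
      _ ≤ 2 * (1 + Real.log (1 / (1 - x))) := by linarith

lemma div_mul_log_one_div_one_sub_rpow_le {q : ℝ} (hq : 0 < q) (hx : x ∈ Ioo (0 : ℝ) 1) :
    ((1 / x) * Real.log (1 / (1 - x))) ^ q ≤
      (2 * (1 + 2 * q)) ^ q * (1 - x) ^ (-(1 / 2) : ℝ) := by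
  have hu : 0 < 1 - x := by linarith [hx.2]
  have hbound : (1 / x) * Real.log (1 / (1 - x)) ≤
      2 * (1 + 2 * q) * (1 / (1 - x)) ^ (1 / (2 * q)) :=
    calc (1 / x) * Real.log (1 / (1 - x)) ≤ 2 * (1 + Real.log (1 / (1 - x))) :=
          div_mul_log_one_div_one_sub_le hx
      _ ≤ 2 * ((1 + 1 / (1 / (2 * q))) * (1 / (1 - x)) ^ (1 / (2 * q))) := by
          gcongr
          exact one_add_log_le_mul_rpow (one_le_one_div_one_sub hx.1.le hx.2) (by positivity)
      _ = 2 * (1 + 2 * q) * (1 / (1 - x)) ^ (1 / (2 * q)) := by rw [one_div_one_div]; ring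
  calc ((1 / x) * Real.log (1 / (1 - x))) ^ q
      ≤ (2 * (1 + 2 * q) * (1 / (1 - x)) ^ (1 / (2 * q))) ^ q := by
        gcongr; exact div_mul_log_one_div_one_sub_nonneg hx
    _ = (2 * (1 + 2 * q)) ^ q * (1 - x) ^ (-(1 / 2) : ℝ) := by
        rw [Real.mul_rpow (by positivity) (by positivity), ← Real.rpow_mul (by positivity),
          one_div, Real.inv_rpow hu.le, ← Real.rpow_neg hu.le]
        congr 3
        field_simp

end CesaroMean

lemma integrableOn_one_sub_rpow {s : ℝ} (hs : -1 < s) :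
    IntegrableOn (fun x : ℝ => (1 - x) ^ s) (Ioo 0 1) := by
  have h := (intervalIntegral.integrableOn_Ioo_rpow_iff zero_lt_one).2 hs
  rw [← intervalIntegrable_iff_integrableOn_Ioo_of_le zero_le_one] at h ⊢
  simpa using (h.comp_sub_left 1).symm

lemma not_integrableOn_one_div_one_sub :
    ¬ IntegrableOn (fun x : ℝ => 1 / (1 - x)) (Ioo 0 1) := by
  rw [← intervalIntegrable_iff_integrableOn_Ioo_of_le zero_le_one]
  intro h
  simpa using h.comp_sub_left 1

lemma setLIntegral_ofReal_one_div_one_sub_eq_top :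
    ∫⁻ x in Ioo (0 : ℝ) 1, ENNReal.ofReal (1 / (1 - x)) = ⊤ := by
  have hmeas : AEStronglyMeasurable (fun x : ℝ => 1 / (1 - x)) (volume.restrict (Ioo 0 1)) :=
    (measurable_const.div (measurable_const.sub measurable_id)).aestronglyMeasurable
  have hnonneg : 0 ≤ᵐ[volume.restrict (Ioo 0 1)] fun x : ℝ => 1 / (1 - x) := by
    filter_upwards [ae_restrict_mem measurableSet_Ioo] with x hx
    exact one_div_nonneg.2 (by linarith [hx.2])
  by_contra h
  exact not_integrableOn_one_div_one_sub
    ((lintegral_ofReal_ne_top_iff_integrable hmeas hnonneg).1 h)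

/-- The function `f(x) = 1/(1-x)` on `[0,1)` satisfies
`∫₀¹ ((1/x) ln(1/(1-x)))^q dx < ∞` for every `1 < q < ∞`, but `f ∉ L¹[0,1]`;
so `Cf ∈ L^q[0,1]` for all `1 < q < ∞` although `f ∉ L¹[0,1]`. -/
theorem cesaro_Lq_not_subset_L1 :
    (∀ q : ℝ, 1 < q →
      (∫⁻ x in Set.Ioo (0:ℝ) 1,
          (ENNReal.ofReal ((1/x) * Real.log (1/(1-x)))) ^ q) < ⊤) ∧
    ((∫⁻ x in Set.Ioo (0:ℝ) 1, ENNReal.ofReal (1/(1-x))) = ⊤) := by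
  refine ⟨fun q hq => ?_, setLIntegral_ofReal_one_div_one_sub_eq_top⟩
  have hq0 : 0 < q := by linarith
  have hdom : IntegrableOn (fun x : ℝ => (2 * (1 + 2 * q)) ^ q * (1 - x) ^ (-(1 / 2) : ℝ))
      (Ioo 0 1) := (integrableOn_one_sub_rpow (by norm_num)).const_mul _
  refine lt_of_le_of_lt (setLIntegral_mono' measurableSet_Ioo fun x hx => ?_)
    hdom.setLIntegral_lt_top
  rw [ENNReal.ofReal_rpow_of_nonneg (div_mul_log_one_div_one_sub_nonneg hx) hq0.le]
  exact ENNReal.ofReal_le_ofReal (div_mul_log_one_div_one_sub_rpow_le hq0 hx)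
end

section
/- Let X and Y be symmetric Banach function spaces on I on which the Cesàro operator C is bounded. If CX ⊆ CY with continuous inclusion, then X ⊆ Y with continuous inclusion. Consequently X = Y (with equivalent norms) if and only if CX = CY (with equivalent norms). -/
/-!
The rearrangement `f*` of `f ∈ X` is equimeasurable with `f`: its distribution function tends to
`0`, for otherwise a fixed indicator `1_{[0, m)}` would be equimeasurable with something below
`|f| / λ` for every `λ > 0` and so have norm zero. Being nonincreasing, `f*` satisfies
`f* ≤ C f*`, so by symmetry and the ideal property
`‖f‖_Y = ‖f*‖_Y ≤ ‖C f*‖_Y ≤ K ‖C f*‖_X ≤ K M ‖f*‖_X = K M ‖f‖_X`.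
-/

open MeasureTheory Filter Set
open scoped ENNReal

noncomputable section

/-- Continuous inclusion of one abstract function space into another. -/
def ContIncl (M₁ M₂ : (ℝ → ℝ) → Prop) (N₁ N₂ : (ℝ → ℝ) → ℝ) : Prop :=
  ∃ K : ℝ, ∀ f, M₁ f → M₂ f ∧ N₂ f ≤ K * N₁ f

/-- `X` is a symmetric space: membership and the norm depend only on the distribution. -/
def IsSymmetricBFS (I : Set ℝ) (X : BanachFunctionSpace I) : Prop :=
  ∀ f g : ℝ → ℝ, X.Mem f →
    (∀ lam : ℝ, 0 < lam →
      volume {x ∈ I | lam < |f x|} = volume {x ∈ I | lam < |g x|}) →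
    X.Mem g ∧ X.norm g = X.norm f

open scoped Topology

def distribution (I : Set ℝ) (f : ℝ → ℝ) (lam : ℝ) : ℝ≥0∞ :=
  volume {x ∈ I | lam < |f x|}

section distribution

variable {I : Set ℝ} {f : ℝ → ℝ}

lemma distribution_antitone : Antitone (distribution I f) :=
  fun _ _ hab => measure_mono fun _ hx => ⟨hx.1, hab.trans_lt hx.2⟩

lemma distribution_le_volume (lam : ℝ) : distribution I f lam ≤ volume I :=
  measure_mono (sep_subset _ _)

lemma distribution_le_of_forall_lt {lam : ℝ} {c : ℝ≥0∞}
    (h : ∀ mu, lam < mu → distribution I f mu ≤ c) : distribution I f lam ≤ c := by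
  have hunion : {x ∈ I | lam < |f x|} = ⋃ n : ℕ, {x ∈ I | lam + 1 / (n + 1) < |f x|} := by
    ext x
    simp only [mem_iUnion, mem_ofPred_eq]
    refine ⟨fun ⟨hxI, hx⟩ => ?_, fun ⟨n, hxI, hx⟩ => ⟨hxI, lt_of_le_of_lt ?_ hx⟩⟩
    · obtain ⟨n, hn⟩ := exists_nat_one_div_lt (sub_pos.mpr hx)
      exact ⟨n, hxI, by linarith⟩
    · simp only [le_add_iff_nonneg_right]
      positivity
  have hmono : Monotone fun n : ℕ => {x ∈ I | lam + 1 / (n + 1) < |f x|} :=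
    fun _ _ _ _ hx => ⟨hx.1, lt_of_le_of_lt (by gcongr) hx.2⟩
  rw [distribution, hunion, hmono.measure_iUnion]
  exact iSup_le fun n => h _ (lt_add_of_pos_right _ (by positivity))

lemma distribution_indicator_one (S : Set ℝ) {lam : ℝ} (hlam : 0 ≤ lam) :
    distribution I (S.indicator 1) lam = if lam < 1 then volume (I ∩ S) else 0 := by
  rw [distribution]
  split_ifs with h
  · congr 1
    ext x
    by_cases hx : x ∈ S <;> simp [hx, h, hlam.not_gt]
  · convert measure_empty (μ := volume)
    ext x
    by_cases hx : x ∈ S <;> simp [hx, hlam.not_gt, not_lt.1 h]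

end distribution

lemma abs_indicator_one_le_of_subset {S T : Set ℝ} (h : S ⊆ T) (x : ℝ) :
    |S.indicator (1 : ℝ → ℝ) x| ≤ |T.indicator 1 x| := by
  by_cases hS : x ∈ S
  · simp [hS, h hS]
  · simp [hS]

def initialSegment (m : ℝ≥0∞) : Set ℝ := {t | 0 ≤ t ∧ ENNReal.ofReal t < m}

lemma initialSegment_mono : Monotone initialSegment :=
  fun _ _ h _ ht => ⟨ht.1, ht.2.trans_le h⟩

lemma volume_initialSegment (m : ℝ≥0∞) : volume (initialSegment m) = m := by
  rcases eq_or_ne m ⊤ with rfl | hm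
  · have : initialSegment ⊤ = Ici 0 := by ext; simp [initialSegment]
    simp [this]
  · have : initialSegment m = Ico 0 m.toReal := by
      ext t
      simp only [initialSegment, mem_ofPred_eq, mem_Ico]
      exact and_congr_right fun ht => ENNReal.ofReal_lt_iff_lt_toReal ht hm
    simp [this, ENNReal.ofReal_toReal hm]

section domain

variable {I : Set ℝ}

lemma subset_Ici_of (hI : I = Icc 0 1 ∨ I = Ici 0) : I ⊆ Ici 0 := by
  rcases hI with rfl | rfl
  exacts [Icc_subset_Ici_self, subset_rfl]

lemma one_le_volume_of (hI : I = Icc 0 1 ∨ I = Ici 0) : 1 ≤ volume I := by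
  rcases hI with rfl | rfl <;> simp

lemma initialSegment_subset_of_le_volume (hI : I = Icc 0 1 ∨ I = Ici 0) {m : ℝ≥0∞}
    (hm : m ≤ volume I) : initialSegment m ⊆ I := by
  rintro t ⟨ht0, htm⟩
  rcases hI with rfl | rfl
  · refine ⟨ht0, ?_⟩
    have : ENNReal.ofReal t < 1 := htm.trans_le (by simpa using hm)
    exact (ENNReal.ofReal_lt_one.1 this).le
  · exact ht0

lemma ae_restrict_pos_of_subset_Ici (hI : I ⊆ Ici 0) : ∀ᵐ x ∂volume.restrict I, 0 < x := by
  have hle : volume.restrict I ≤ volume.restrict (Ioi 0) := by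
    rw [Measure.restrict_congr_set Ioi_ae_eq_Ici]
    exact Measure.restrict_mono hI le_rfl
  exact ae_mono hle (ae_restrict_mem measurableSet_Ioi)

end domain

namespace BanachFunctionSpace

variable {I : Set ℝ} (X : BanachFunctionSpace I)

lemma mem_indicator_superlevel {f : ℝ → ℝ} (hf : X.Mem f) {lam : ℝ} (hlam : 0 < lam) :
    X.Mem ({x | lam < |f x|}.indicator 1) ∧
      lam * X.norm ({x | lam < |f x|}.indicator 1) ≤ X.norm f := by
  have hdom : ∀ x, |{x | lam < |f x|}.indicator 1 x| ≤ |(lam⁻¹ • f) x| := by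
    intro x
    by_cases hx : lam < |f x|
    · simp only [indicator_of_mem (show x ∈ {x | lam < |f x|} from hx), Pi.one_apply, abs_one,
        Pi.smul_apply, smul_eq_mul, abs_mul, abs_inv, abs_of_pos hlam]
      rw [le_inv_mul_iff₀ hlam, mul_one]
      exact hx.le
    · simp only [indicator_of_notMem (show x ∉ {x | lam < |f x|} from hx), abs_zero]
      exact abs_nonneg _
  have hmem := X.smul_mem lam⁻¹ f hf
  refine ⟨X.ideal_mem _ _ (.of_forall hdom) hmem, ?_⟩
  calc lam * X.norm ({x | lam < |f x|}.indicator 1)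
      ≤ lam * X.norm (lam⁻¹ • f) := by gcongr; exact X.ideal_norm _ _ (.of_forall hdom) hmem
    _ = X.norm f := by
      rw [X.norm_smul, abs_inv, abs_of_pos hlam, ← mul_assoc, mul_inv_cancel₀ hlam.ne', one_mul]

lemma volume_inter_eq_zero {S : Set ℝ} (hS : X.Mem (S.indicator 1))
    (h0 : X.norm (S.indicator 1) = 0) : volume (I ∩ S) = 0 := by
  have hae := X.norm_eq_zero _ hS h0
  rw [ae_iff] at hae
  have hS0 : {x | ¬S.indicator 1 x = (0 : ℝ)} = S := by
    ext x
    by_cases hx : x ∈ S <;> simp [hx]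
  rw [hS0] at hae
  exact measure_mono_null (inter_comm I S).le
    (nonpos_iff_eq_zero.1 ((Measure.le_restrict_apply I S).trans hae.le))

end BanachFunctionSpace

lemma eq_zero_of_forall_mul_le {a b : ℝ} (ha : 0 ≤ a) (h : ∀ lam, 0 < lam → lam * a ≤ b) :
    a = 0 := by
  by_contra hne
  have := h ((|b| + 1) / a) (by positivity)
  rw [div_mul_cancel₀ _ hne] at this
  linarith [le_abs_self b]

namespace IsSymmetricBFS

variable {I : Set ℝ} {X : BanachFunctionSpace I}

lemma indicator_congr (hX : IsSymmetricBFS I X) {S T : Set ℝ}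
    (hST : volume (I ∩ S) = volume (I ∩ T)) (hS : X.Mem (S.indicator 1)) :
    X.Mem (T.indicator 1) ∧ X.norm (T.indicator 1) = X.norm (S.indicator 1) :=
  hX _ _ hS fun lam hlam => by
    have h := fun U => distribution_indicator_one (I := I) U hlam.le
    simp only [distribution] at h
    rw [h, h, hST]

lemma tendsto_distribution (hI : I = Icc 0 1 ∨ I = Ici 0) (hX : IsSymmetricBFS I X)
    {f : ℝ → ℝ} (hf : X.Mem f) : Tendsto (distribution I f) atTop (𝓝 0) := by
  rw [ENNReal.tendsto_atTop_zero]
  by_contra! hfat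
  obtain ⟨ε, hε, hlt⟩ := hfat
  set m := min ε 1
  have hm : 0 < m := lt_min hε one_pos
  have hmI : initialSegment m ⊆ I :=
    initialSegment_subset_of_le_volume hI ((min_le_right _ _).trans (one_le_volume_of hI))
  -- `1_{|f| > λ}` has norm at most `‖f‖ / λ` and is equimeasurable with `1_{[0, d_f(λ))}`,
  -- which dominates `1_{[0, m)}`; so `1_{[0, m)}` has norm zero although `m > 0`.
  have hbound : ∀ lam, 0 < lam →
      X.Mem ((initialSegment m).indicator 1) ∧
        lam * X.norm ((initialSegment m).indicator 1) ≤ X.norm f := by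
    intro lam hlam
    obtain ⟨hmemS, hnormS⟩ := X.mem_indicator_superlevel hf hlam
    set T := initialSegment (distribution I f lam)
    have hTI : T ⊆ I := initialSegment_subset_of_le_volume hI (distribution_le_volume lam)
    obtain ⟨hmemT, hnormT⟩ := hX.indicator_congr
      (by rw [inter_eq_right.2 hTI, volume_initialSegment]; rfl) hmemS
    obtain ⟨N, hN, hdN⟩ := hlt lam
    have hmT : initialSegment m ⊆ T :=
      initialSegment_mono ((min_le_left _ _).trans (hdN.trans_le (distribution_antitone hN)).le)
    have hdom := abs_indicator_one_le_of_subset hmT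
    refine ⟨X.ideal_mem _ _ (.of_forall hdom) hmemT, ?_⟩
    calc lam * X.norm ((initialSegment m).indicator 1)
        ≤ lam * X.norm (T.indicator 1) := by
          gcongr; exact X.ideal_norm _ _ (.of_forall hdom) hmemT
      _ ≤ X.norm f := hnormT ▸ hnormS
  have hw0 := eq_zero_of_forall_mul_le (X.norm_nonneg _) fun lam hlam => (hbound lam hlam).2
  have := X.volume_inter_eq_zero (hbound 1 one_pos).1 hw0
  rw [inter_eq_right.2 hmI, volume_initialSegment] at this
  exact hm.ne' this

end IsSymmetricBFS

lemma ofReal_le_ces_of_antitoneOn {g : ℝ → ℝ} {x : ℝ} (hx : 0 < x)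
    (hg : AntitoneOn g (Ioc 0 x)) : ENNReal.ofReal (g x) ≤ ces g x := by
  have hint : ENNReal.ofReal (g x) * ENNReal.ofReal x ≤
      ∫⁻ t in Ioc 0 x, ENNReal.ofReal |g t| := by
    calc ENNReal.ofReal (g x) * ENNReal.ofReal x = ∫⁻ _ in Ioc 0 x, ENNReal.ofReal (g x) := by
          rw [setLIntegral_const, Real.volume_Ioc, sub_zero]
      _ ≤ _ := setLIntegral_mono' measurableSet_Ioc fun t ht =>
          ENNReal.ofReal_le_ofReal ((hg ht ⟨hx, le_rfl⟩ ht.2).trans (le_abs_self _))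
  calc ENNReal.ofReal (g x)
      = ENNReal.ofReal (1 / x) * (ENNReal.ofReal (g x) * ENNReal.ofReal x) := by
        rw [mul_left_comm, ← ENNReal.ofReal_mul (by positivity), one_div_mul_cancel hx.ne',
          ENNReal.ofReal_one, mul_one]
    _ ≤ ces g x := by rw [ces]; gcongr

-- Only meaningful when `distribution I f` tends to `0`: otherwise the set can be empty for
-- small `t`, and `sInf ∅ = 0`.
def decreasingRearrangement (I : Set ℝ) (f : ℝ → ℝ) (t : ℝ) : ℝ :=
  sInf {lam : ℝ | 0 ≤ lam ∧ distribution I f lam ≤ ENNReal.ofReal t}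

namespace decreasingRearrangement

variable {I : Set ℝ} {f : ℝ → ℝ}

lemma nonneg (t : ℝ) : 0 ≤ decreasingRearrangement I f t :=
  Real.sInf_nonneg fun _ hlam => hlam.1

lemma le_of_distribution_le {t lam : ℝ} (hlam : 0 ≤ lam)
    (h : distribution I f lam ≤ ENNReal.ofReal t) : decreasingRearrangement I f t ≤ lam :=
  csInf_le ⟨0, fun _ hmu => hmu.1⟩ ⟨hlam, h⟩

lemma nonempty (hf : Tendsto (distribution I f) atTop (𝓝 0)) {t : ℝ} (ht : 0 < t) :
    {lam : ℝ | 0 ≤ lam ∧ distribution I f lam ≤ ENNReal.ofReal t}.Nonempty := by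
  obtain ⟨N, hN⟩ := ENNReal.tendsto_atTop_zero.1 hf _ (ENNReal.ofReal_pos.2 ht)
  exact ⟨max N 0, le_max_right _ _, hN _ (le_max_left _ _)⟩

-- The right-continuity of the distribution function is what makes the infimum attained.
lemma distribution_le_of_le (hf : Tendsto (distribution I f) atTop (𝓝 0)) {t lam : ℝ}
    (ht : 0 < t) (h : decreasingRearrangement I f t ≤ lam) :
    distribution I f lam ≤ ENNReal.ofReal t := by
  refine distribution_le_of_forall_lt fun mu hmu => ?_
  obtain ⟨nu, hnu, hnumu⟩ := exists_lt_of_csInf_lt (nonempty hf ht) (h.trans_lt hmu)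
  exact (distribution_antitone hnumu.le).trans hnu.2

lemma antitoneOn (hf : Tendsto (distribution I f) atTop (𝓝 0)) :
    AntitoneOn (decreasingRearrangement I f) (Ioi 0) :=
  fun _ hs _ _ hst => csInf_le_csInf ⟨0, fun _ hmu => hmu.1⟩ (nonempty hf hs)
    fun _ hlam => ⟨hlam.1, hlam.2.trans (ENNReal.ofReal_le_ofReal hst)⟩

lemma distribution_eq (hf : Tendsto (distribution I f) atTop (𝓝 0))
    (hI : I = Icc 0 1 ∨ I = Ici 0) {lam : ℝ} (hlam : 0 ≤ lam) :
    distribution I (decreasingRearrangement I f) lam = distribution I f lam := by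
  have habs : ∀ t, |decreasingRearrangement I f t| = decreasingRearrangement I f t :=
    fun t => abs_of_nonneg (nonneg t)
  have hvol := volume_initialSegment (distribution I f lam)
  apply le_antisymm
  · refine (measure_mono fun t (ht : t ∈ I ∧ _) => show t ∈ initialSegment _ from
      ⟨subset_Ici_of hI ht.1, ?_⟩).trans hvol.le
    have ht : lam < decreasingRearrangement I f t := habs t ▸ ht.2
    exact not_le.1 fun hle => (le_of_distribution_le hlam hle).not_gt ht
  · rw [← hvol, ← measure_sdiff_null (measure_singleton 0)]
    refine measure_mono fun t ⟨ht, ht0⟩ => ⟨?_, ?_⟩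
    · exact initialSegment_subset_of_le_volume hI (distribution_le_volume lam) ht
    · rw [habs]
      exact not_le.1 fun hle =>
        (distribution_le_of_le hf (ht.1.lt_of_ne' ht0) hle).not_gt ht.2

lemma ofReal_abs_le_ces (hf : Tendsto (distribution I f) atTop (𝓝 0)) {x : ℝ} (hx : 0 < x) :
    ENNReal.ofReal |decreasingRearrangement I f x| ≤ ces (decreasingRearrangement I f) x := by
  rw [abs_of_nonneg (nonneg x)]
  exact ofReal_le_ces_of_antitoneOn hx ((antitoneOn hf).mono fun _ ht => ht.1)

end decreasingRearrangement

lemma BanachFunctionSpace.mem_of_ofReal_abs_le_ces {I : Set ℝ} (Y : BanachFunctionSpace I)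
    {g : ℝ → ℝ} (hg : MemCX I Y g)
    (hle : ∀ᵐ x ∂volume.restrict I, ENNReal.ofReal |g x| ≤ ces g x) :
    Y.Mem g ∧ Y.norm g ≤ Y.norm (cesR g) := by
  have hdom : ∀ᵐ x ∂volume.restrict I, |g x| ≤ |cesR g x| := by
    filter_upwards [hle, hg.1] with x hx hfin
    calc |g x| = (ENNReal.ofReal |g x|).toReal := (ENNReal.toReal_ofReal (abs_nonneg _)).symm
      _ ≤ cesR g x := ENNReal.toReal_mono hfin hx
      _ ≤ |cesR g x| := le_abs_self _
  exact ⟨Y.ideal_mem _ _ hdom hg.2, Y.ideal_norm _ _ hdom hg.2⟩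

lemma contIncl_of_contIncl_cesaro {I : Set ℝ} (hI : I = Icc 0 1 ∨ I = Ici 0)
    {X Y : BanachFunctionSpace I} (hsX : IsSymmetricBFS I X) (hsY : IsSymmetricBFS I Y)
    (hCX : CBounded I X)
    (hincl : ContIncl (MemCX I X) (MemCX I Y)
      (fun f => X.norm (cesR f)) (fun f => Y.norm (cesR f))) :
    ContIncl X.Mem Y.Mem X.norm Y.norm := by
  obtain ⟨K, hK⟩ := hincl
  obtain ⟨M, hM⟩ := hCX
  refine ⟨max K 0 * max M 0, fun f hf => ?_⟩
  have hdecay := hsX.tendsto_distribution hI hf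
  set g := decreasingRearrangement I f
  have hdist : ∀ lam : ℝ, 0 < lam →
      volume {x ∈ I | lam < |f x|} = volume {x ∈ I | lam < |g x|} :=
    fun lam hlam => (decreasingRearrangement.distribution_eq hdecay hI hlam.le).symm
  obtain ⟨hXg, hnormXg⟩ := hsX f g hf hdist
  obtain ⟨hCXg, hnormCXg⟩ := hM g hXg
  obtain ⟨hCYg, hnormCYg⟩ := hK g hCXg
  obtain ⟨hYg, hnormYg⟩ := Y.mem_of_ofReal_abs_le_ces hCYg <| by
    filter_upwards [ae_restrict_pos_of_subset_Ici (subset_Ici_of hI)]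
      with x hx using decreasingRearrangement.ofReal_abs_le_ces hdecay hx
  obtain ⟨hYf, hnormYf⟩ := hsY g f hYg fun lam hlam => (hdist lam hlam).symm
  refine ⟨hYf, ?_⟩
  have := X.norm_nonneg (cesR g)
  have := X.norm_nonneg g
  calc Y.norm f = Y.norm g := hnormYf
    _ ≤ Y.norm (cesR g) := hnormYg
    _ ≤ max K 0 * X.norm (cesR g) := hnormCYg.trans (by gcongr; exact le_max_left _ _)
    _ ≤ max K 0 * (max M 0 * X.norm g) := by
      gcongr
      exact hnormCXg.trans (by gcongr; exact le_max_left _ _)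
    _ = max K 0 * max M 0 * X.norm f := by rw [hnormXg, mul_assoc]

/-- If `X, Y` are symmetric spaces on which `C` is bounded and `CX ⊆ CY` continuously,
then `X ⊆ Y` continuously; consequently `X = Y` iff `CX = CY`. -/
theorem cesaro_inclusion_transfers (I : Set ℝ) (hI : I = Set.Icc 0 1 ∨ I = Set.Ici 0)
    (X Y : BanachFunctionSpace I)
    (hsX : IsSymmetricBFS I X) (hsY : IsSymmetricBFS I Y)
    (hCX : CBounded I X) (hCY : CBounded I Y) :
    (ContIncl (MemCX I X) (MemCX I Y)
        (fun f => X.norm (cesR f)) (fun f => Y.norm (cesR f)) →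
      ContIncl X.Mem Y.Mem X.norm Y.norm) ∧
    ((ContIncl X.Mem Y.Mem X.norm Y.norm ∧ ContIncl Y.Mem X.Mem Y.norm X.norm) ↔
      (ContIncl (MemCX I X) (MemCX I Y)
          (fun f => X.norm (cesR f)) (fun f => Y.norm (cesR f)) ∧
        ContIncl (MemCX I Y) (MemCX I X)
          (fun f => Y.norm (cesR f)) (fun f => X.norm (cesR f)))) := by
  refine ⟨contIncl_of_contIncl_cesaro hI hsX hsY hCX, ?_, fun ⟨hXY, hYX⟩ =>
    ⟨contIncl_of_contIncl_cesaro hI hsX hsY hCX hXY,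
      contIncl_of_contIncl_cesaro hI hsY hsX hCY hYX⟩⟩
  rintro ⟨⟨K₁, hK₁⟩, ⟨K₂, hK₂⟩⟩
  exact ⟨⟨K₁, fun f hf => ⟨⟨hf.1, (hK₁ _ hf.2).1⟩, (hK₁ _ hf.2).2⟩⟩,
    ⟨K₂, fun f hf => ⟨⟨hf.1, (hK₂ _ hf.2).1⟩, (hK₂ _ hf.2).2⟩⟩⟩
end
end

section
/- Let X be a Banach function space on I such that the Cesàro space CX is nontrivial. Then CX contains an order asymptotically isometric copy of ℓ¹: there exist a sequence (g_n) ⊂ CX of norm-one functions with pairwise disjoint supports and a sequence (ε_n) ⊂ (0,1) with ε_n → 0, such that Σ(1−ε_n)|α_n| ≤ ‖Σ α_n g_n‖_{CX} ≤ Σ|α_n| for every (α_n) ∈ ℓ¹. -/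
open MeasureTheory Filter Set
open scoped ENNReal

noncomputable section

/-!
Write `w_λ = (1/x) χ_{(λ,∞)}`; the Cesàro transform of `χ_{(u,v]}` lies between `(v - u) w_v`
and `(v - u) w_u`. A nonzero `f ∈ CX` gives `C|f| ≥ c w_a` for some `a` in the interior of `I`, so
`w_λ ∈ X` for `λ ≥ a`, and the antitone function `F(λ) = ‖w_λ‖_X` has a continuity point `a₀ > a`
with `F(a₀) > 0`. For `s_n ↑ a₀`, the normalized indicators `g_n` of `(s_n, s_{n+1}]` then satisfy
`C g_n ≤ w_a / F(a₀)` and `C g_n ≥ (F(a₀) / F(s_n)) · w_{a₀} / F(a₀)`. As the `g_n` are disjoint,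
`C|∑ α_n g_n| = ∑ |α_n| C g_n`: the common majorant makes the triangle inequality pass to the
series in `X`, the common minorant gives `‖∑ α_n g_n‖_{CX} ≥ ∑ (F(a₀) / F(s_n)) |α_n|`, and
`F(s_n) → F(a₀)`.
-/

theorem summable_mul_of_le {c f : ℕ → ℝ} {B : ℝ} (hc0 : ∀ n, 0 ≤ c n) (hc : Summable c)
    (hf0 : ∀ n, 0 ≤ f n) (hfB : ∀ n, f n ≤ B) : Summable fun n => c n * f n :=
  (hc.mul_right B).of_nonneg_of_le (fun n => mul_nonneg (hc0 n) (hf0 n))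
    fun n => mul_le_mul_of_nonneg_left (hfB n) (hc0 n)

theorem tsum_mul_le_tsum_mul {c f : ℕ → ℝ} {B : ℝ} (hc0 : ∀ n, 0 ≤ c n) (hc : Summable c)
    (hf0 : ∀ n, 0 ≤ f n) (hfB : ∀ n, f n ≤ B) : ∑' n, c n * f n ≤ (∑' n, c n) * B := by
  rw [← tsum_mul_right]
  exact (summable_mul_of_le hc0 hc hf0 hfB).tsum_le_tsum
    (fun n => mul_le_mul_of_nonneg_left (hfB n) (hc0 n)) (hc.mul_right B)

theorem exists_tendsto_zero_one_sub_le {δ : ℕ → ℝ} (hδ : ∀ n, 0 < δ n)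
    (hlim : Tendsto δ atTop (nhds 1)) :
    ∃ ε : ℕ → ℝ, (∀ n, ε n ∈ Ioo 0 1) ∧ Tendsto ε atTop (nhds 0) ∧ ∀ n, 1 - ε n ≤ δ n := by
  have h1 : Tendsto (fun n => 1 - δ n) atTop (nhds 0) := by
    simpa using (tendsto_const_nhds (x := (1 : ℝ))).sub hlim
  have h2 : Tendsto (fun n : ℕ => (2 : ℝ)⁻¹ ^ (n + 1)) atTop (nhds 0) :=
    (tendsto_pow_atTop_nhds_zero_of_lt_one (by norm_num) (by norm_num)).comp
      (tendsto_add_atTop_nat 1)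
  refine ⟨fun n => max (1 - δ n) ((2 : ℝ)⁻¹ ^ (n + 1)), fun n => ⟨?_, ?_⟩, ?_, fun n => ?_⟩
  · exact lt_max_of_lt_right (by positivity)
  · exact max_lt (by linarith [hδ n]) (pow_lt_one₀ (by norm_num) (by norm_num) n.succ_ne_zero)
  · simpa using h1.max h2
  · linarith [le_max_left (1 - δ n) ((2 : ℝ)⁻¹ ^ (n + 1))]

theorem exists_mem_measure_inter_Ioc_ne_zero {U T : Set ℝ} (hU : IsOpen U) (hU0 : U ⊆ Ioi 0)
    (h : volume (T ∩ U) ≠ 0) : ∃ q ∈ U, volume (T ∩ Ioc 0 q) ≠ 0 := by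
  by_contra! hnull
  refine h (measure_mono_null (t := ⋃ (q : ℚ) (_ : (q : ℝ) ∈ U), T ∩ Ioc 0 (q : ℝ)) ?_
    (measure_iUnion_null fun q => measure_iUnion_null fun hq => hnull q hq))
  rintro x ⟨hxT, hxU⟩
  obtain ⟨l, hxl, hl⟩ := exists_Ico_subset_of_mem_nhds (hU.mem_nhds hxU) ⟨x + 1, by linarith⟩
  obtain ⟨q, hxq, hql⟩ := exists_rat_btwn hxl
  exact mem_iUnion₂.2 ⟨q, hl ⟨hxq.le, hql⟩, hxT, hU0 hxU, hxq.le⟩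

theorem exists_mem_interior_lintegral_Ioc_pos {I : Set ℝ} (hI : Convex ℝ I) (hI0 : I ⊆ Ici 0)
    {f : ℝ → ℝ} (hf : Measurable f) (hne : ¬ ∀ᵐ x ∂(volume.restrict I), f x = 0) :
    ∃ q ∈ interior I, 0 < ∫⁻ t in Ioc 0 q, ENNReal.ofReal |f t| := by
  have hsupp : MeasurableSet (Function.support f) := hf (measurableSet_singleton 0).compl
  have hI' : volume (Function.support f ∩ interior I) ≠ 0 := by
    rw [measure_congr ((ae_eq_refl _).inter
      (interior_ae_eq_of_null_frontier (hI.addHaar_frontier volume))),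
      ← Measure.restrict_apply hsupp]
    exact fun h => hne (ae_iff.2 h)
  have hint0 : interior I ⊆ Ioi 0 := by simpa using interior_mono hI0
  obtain ⟨q, hq, hTq⟩ := exists_mem_measure_inter_Ioc_ne_zero isOpen_interior hint0 hI'
  refine ⟨q, hq, ?_⟩
  rw [lintegral_pos_iff_support (by fun_prop), Measure.restrict_apply' measurableSet_Ioc]
  simpa [Function.support, abs_pos] using pos_iff_ne_zero.2 hTq

theorem Antitone.exists_continuousAt_gt_mem_interior {F : ℝ → ℝ} (hF : Antitone F) {I : Set ℝ}
    {a : ℝ} (ha : a ∈ interior I) : ∃ a₀ ∈ interior I, a < a₀ ∧ ContinuousAt F a₀ := by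
  obtain ⟨l, hl, hlI⟩ :=
    exists_Ico_subset_of_mem_nhds (isOpen_interior.mem_nhds ha) ⟨a + 1, by linarith⟩
  have hV : volume (Ioo a l \ {x | ¬ContinuousAt F x}) ≠ 0 := by
    rw [measure_sdiff_null (hF.countable_not_continuousAt.measure_zero volume), Real.volume_Ioo]
    simpa using hl
  obtain ⟨a₀, ⟨ha₀, ha₀l⟩, hcont⟩ := nonempty_of_measure_ne_zero hV
  exact ⟨a₀, hlI ⟨ha₀.le, ha₀l⟩, ha₀, not_not.1 hcont⟩

namespace BanachFunctionSpace

variable {I : Set ℝ} (X : BanachFunctionSpace I)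

theorem mem_of_le {f g : ℝ → ℝ} (hf : ∀ x, 0 ≤ f x) (hfg : ∀ x, f x ≤ g x) (hg : X.Mem g) :
    X.Mem f :=
  X.ideal_mem f g (Eventually.of_forall fun x => by
    rw [abs_of_nonneg (hf x), abs_of_nonneg ((hf x).trans (hfg x))]; exact hfg x) hg

theorem norm_le_of_le {f g : ℝ → ℝ} (hf : ∀ x, 0 ≤ f x) (hfg : ∀ x, f x ≤ g x) (hg : X.Mem g) :
    X.norm f ≤ X.norm g :=
  X.ideal_norm f g (Eventually.of_forall fun x => by
    rw [abs_of_nonneg (hf x), abs_of_nonneg ((hf x).trans (hfg x))]; exact hfg x) hg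

theorem mul_norm_le_norm_of_le {c : ℝ} {u f : ℝ → ℝ} (hc : 0 ≤ c) (hu : ∀ x, 0 ≤ u x)
    (huf : ∀ x, c * u x ≤ f x) (hf : X.Mem f) : c * X.norm u ≤ X.norm f := by
  simpa [X.norm_smul, abs_of_nonneg hc] using
    X.norm_le_of_le (f := c • u) (fun x => mul_nonneg hc (hu x)) huf hf

theorem norm_le_mul_norm_of_le {c : ℝ} {f U : ℝ → ℝ} (hc : 0 ≤ c) (hf : ∀ x, 0 ≤ f x)
    (hfU : ∀ x, f x ≤ c * U x) (hU : X.Mem U) : X.norm f ≤ c * X.norm U := by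
  simpa [X.norm_smul, abs_of_nonneg hc] using
    X.norm_le_of_le (g := c • U) hf hfU (X.smul_mem c U hU)

theorem mem_sum {ι : Type*} (s : Finset ι) {f : ι → ℝ → ℝ} (hf : ∀ i ∈ s, X.Mem (f i)) :
    X.Mem (∑ i ∈ s, f i) := by
  classical
  induction s using Finset.induction_on with
  | empty => simpa using X.zero_mem
  | insert i s hi ih =>
    rw [Finset.sum_insert hi]
    exact X.add_mem _ _ (hf i (s.mem_insert_self i))
      (ih fun j hj => hf j (Finset.mem_insert_of_mem hj))

theorem norm_sum_le {ι : Type*} (s : Finset ι) {f : ι → ℝ → ℝ} (hf : ∀ i ∈ s, X.Mem (f i)) :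
    X.norm (∑ i ∈ s, f i) ≤ ∑ i ∈ s, X.norm (f i) := by
  classical
  induction s using Finset.induction_on with
  | empty => simp [X.norm_zero]
  | insert i s hi ih =>
    have hs : ∀ j ∈ s, X.Mem (f j) := fun j hj => hf j (Finset.mem_insert_of_mem hj)
    rw [Finset.sum_insert hi, Finset.sum_insert hi]
    exact (X.norm_add_le _ _ (hf i (s.mem_insert_self i)) (X.mem_sum s hs)).trans
      (add_le_add le_rfl (ih hs))

section Series

variable {c : ℕ → ℝ} {φ : ℕ → ℝ → ℝ} {W : ℝ → ℝ}

theorem mem_tsum_of_le (hc0 : ∀ n, 0 ≤ c n) (hc : Summable c) (hφ0 : ∀ n x, 0 ≤ φ n x)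
    (hφW : ∀ n x, φ n x ≤ W x) (hW : X.Mem W) : X.Mem fun x => ∑' n, c n * φ n x :=
  X.mem_of_le (fun x => tsum_nonneg fun n => mul_nonneg (hc0 n) (hφ0 n x))
    (fun x => tsum_mul_le_tsum_mul hc0 hc (fun n => hφ0 n x) fun n => hφW n x)
    (X.smul_mem _ W hW)

theorem norm_tsum_le_add_tail (hc0 : ∀ n, 0 ≤ c n) (hc : Summable c) (hφ0 : ∀ n x, 0 ≤ φ n x)
    (hφW : ∀ n x, φ n x ≤ W x) (hφ : ∀ n, X.Mem (φ n)) (hW : X.Mem W) (N : ℕ) :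
    X.norm (fun x => ∑' n, c n * φ n x) ≤
      ∑' n, c n * X.norm (φ n) + (∑' n, c (n + N)) * X.norm W := by
  have hc' : Summable fun n => c (n + N) := (summable_nat_add_iff N).2 hc
  have hsplit : (fun x => ∑' n, c n * φ n x) =
      ∑ n ∈ Finset.range N, c n • φ n + fun x => ∑' n, c (n + N) * φ (n + N) x := by
    funext x
    simp only [Pi.add_apply, Finset.sum_apply, Pi.smul_apply, smul_eq_mul]
    exact ((summable_mul_of_le hc0 hc (fun n => hφ0 n x) fun n => hφW n x).sum_add_tsum_nat_add
      N).symm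
  have hhead : X.norm (∑ n ∈ Finset.range N, c n • φ n) ≤ ∑' n, c n * X.norm (φ n) := calc
    _ ≤ ∑ n ∈ Finset.range N, X.norm (c n • φ n) :=
        X.norm_sum_le _ fun n _ => X.smul_mem _ _ (hφ n)
    _ = ∑ n ∈ Finset.range N, c n * X.norm (φ n) := by
        simp only [X.norm_smul, abs_of_nonneg (hc0 _)]
    _ ≤ _ := (summable_mul_of_le hc0 hc (fun n => X.norm_nonneg _) fun n =>
        X.norm_le_of_le (hφ0 n) (hφW n) hW).sum_le_tsum _
          fun n _ => mul_nonneg (hc0 n) (X.norm_nonneg _)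
  have htail : X.norm (fun x => ∑' n, c (n + N) * φ (n + N) x) ≤
      (∑' n, c (n + N)) * X.norm W :=
    X.norm_le_mul_norm_of_le (tsum_nonneg fun n => hc0 _)
      (fun x => tsum_nonneg fun n => mul_nonneg (hc0 _) (hφ0 _ x))
      (fun x => tsum_mul_le_tsum_mul (fun n => hc0 _) hc' (fun n => hφ0 _ x) fun n => hφW _ x) hW
  rw [hsplit]
  exact (X.norm_add_le _ _ (X.mem_sum _ fun n _ => X.smul_mem _ _ (hφ n))
    (X.mem_tsum_of_le (fun n => hc0 _) hc' (fun n => hφ0 _) (fun n => hφW _) hW)).trans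
    (add_le_add hhead htail)

theorem norm_tsum_le (hc0 : ∀ n, 0 ≤ c n) (hc : Summable c) (hφ0 : ∀ n x, 0 ≤ φ n x)
    (hφW : ∀ n x, φ n x ≤ W x) (hφ : ∀ n, X.Mem (φ n)) (hW : X.Mem W) :
    X.norm (fun x => ∑' n, c n * φ n x) ≤ ∑' n, c n * X.norm (φ n) := by
  have hlim : Tendsto (fun N => ∑' n, c n * X.norm (φ n) + (∑' n, c (n + N)) * X.norm W)
      atTop (nhds (∑' n, c n * X.norm (φ n))) := by
    simpa using tendsto_const_nhds.add ((tendsto_sum_nat_add c).mul_const (X.norm W))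
  exact ge_of_tendsto' hlim (X.norm_tsum_le_add_tail hc0 hc hφ0 hφW hφ hW)

theorem mul_norm_le_norm_tsum {δ : ℕ → ℝ} {u : ℝ → ℝ} (hc0 : ∀ n, 0 ≤ c n) (hδ0 : ∀ n, 0 ≤ δ n)
    (hδc : Summable fun n => δ n * c n) (hu0 : ∀ x, 0 ≤ u x) (hφu : ∀ n x, δ n * u x ≤ φ n x)
    (hsum : ∀ x, Summable fun n => c n * φ n x) (hS : X.Mem fun x => ∑' n, c n * φ n x) :
    (∑' n, δ n * c n) * X.norm u ≤ X.norm fun x => ∑' n, c n * φ n x := by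
  refine X.mul_norm_le_norm_of_le (tsum_nonneg fun n => mul_nonneg (hδ0 n) (hc0 n)) hu0
    (fun x => ?_) hS
  rw [← tsum_mul_right]
  refine (hδc.mul_right (u x)).tsum_le_tsum (fun n => ?_) (hsum x)
  calc δ n * c n * u x = c n * (δ n * u x) := by ring
    _ ≤ c n * φ n x := mul_le_mul_of_nonneg_left (hφu n x) (hc0 n)

end Series

end BanachFunctionSpace

theorem ces_smul (c : ℝ) (f : ℝ → ℝ) (x : ℝ) :
    ces (c • f) x = ENNReal.ofReal |c| * ces f x := by
  have h : ∀ t, ENNReal.ofReal |(c • f) t| = ENNReal.ofReal |c| * ENNReal.ofReal |f t| :=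
    fun t => by rw [Pi.smul_apply, smul_eq_mul, abs_mul, ENNReal.ofReal_mul (abs_nonneg c)]
  simp only [ces, h, lintegral_const_mul' _ _ ENNReal.ofReal_ne_top, mul_left_comm]

theorem cesR_smul (c : ℝ) (f : ℝ → ℝ) : cesR (c • f) = |c| • cesR f := by
  funext x
  simp [cesR, ces_smul, ENNReal.toReal_mul]

theorem cesR_nonneg (f : ℝ → ℝ) (x : ℝ) : 0 ≤ cesR f x := ENNReal.toReal_nonneg

theorem ces_indicator_Ioc {u v : ℝ} (hu : 0 < u) (x : ℝ) :
    ces ((Ioc u v).indicator 1) x = ENNReal.ofReal (1 / x) * ENNReal.ofReal (min v x - u) := by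
  have h : ∀ t, ENNReal.ofReal |(Ioc u v).indicator (1 : ℝ → ℝ) t| = (Ioc u v).indicator 1 t :=
    fun t => by by_cases ht : t ∈ Ioc u v <;> simp [ht]
  simp only [ces, h, lintegral_indicator_one measurableSet_Ioc, Measure.restrict_apply
    measurableSet_Ioc, Ioc_inter_Ioc, Real.volume_Ioc, max_eq_left hu.le]

theorem cesR_indicator_Ioc {u v : ℝ} (hu : 0 < u) (x : ℝ) :
    cesR ((Ioc u v).indicator 1) x = max (1 / x) 0 * max (min v x - u) 0 := by
  rw [cesR, ces_indicator_Ioc hu, ENNReal.toReal_mul, ENNReal.toReal_ofReal',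
    ENNReal.toReal_ofReal']

def invTail (lam : ℝ) : ℝ → ℝ := (Ioi lam).indicator fun x => 1 / x

theorem invTail_nonneg {lam : ℝ} (hlam : 0 ≤ lam) (x : ℝ) : 0 ≤ invTail lam x := by
  by_cases hx : x ∈ Ioi lam
  · rw [invTail, indicator_of_mem hx, one_div]
    exact inv_nonneg.2 (hlam.trans (le_of_lt hx))
  · rw [invTail, indicator_of_notMem hx]

theorem invTail_anti {lam mu : ℝ} (hlam : 0 ≤ lam) (h : lam ≤ mu) (x : ℝ) :
    invTail mu x ≤ invTail lam x := by
  by_cases hx : x ∈ Ioi mu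
  · rw [invTail, invTail, indicator_of_mem hx, indicator_of_mem (mem_Ioi.2 (h.trans_lt hx))]
  · rw [invTail, indicator_of_notMem hx]
    exact invTail_nonneg hlam x

theorem invTail_pos {lam x : ℝ} (hlam : 0 ≤ lam) (hx : lam < x) : 0 < invTail lam x := by
  rw [invTail, indicator_of_mem (mem_Ioi.2 hx), one_div]
  exact inv_pos.2 (hlam.trans_lt hx)

theorem cesR_indicator_Ioc_le {u v : ℝ} (hu : 0 < u) (huv : u ≤ v) (x : ℝ) :
    cesR ((Ioc u v).indicator 1) x ≤ (v - u) * invTail u x := by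
  rw [cesR_indicator_Ioc hu]
  by_cases hx : u < x
  · have hx0 : 0 < x := hu.trans hx
    rw [invTail, indicator_of_mem (mem_Ioi.2 hx), max_eq_left (by positivity), mul_comm]
    gcongr
    exact max_le (by linarith [min_le_left v x]) (by linarith)
  · rw [max_eq_right (a := min v x - u) (by linarith [min_le_right v x]), mul_zero]
    exact mul_nonneg (by linarith) (invTail_nonneg hu.le x)

theorem le_cesR_indicator_Ioc {u v : ℝ} (hu : 0 < u) (huv : u ≤ v) (x : ℝ) :
    (v - u) * invTail v x ≤ cesR ((Ioc u v).indicator 1) x := by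
  rw [cesR_indicator_Ioc hu]
  by_cases hx : v < x
  · have hx0 : 0 < x := by linarith
    rw [invTail, indicator_of_mem (mem_Ioi.2 hx), min_eq_left hx.le, max_eq_left (by positivity),
      max_eq_left (by linarith), mul_comm]
  · rw [invTail, indicator_of_notMem (notMem_Ioi.2 (not_lt.1 hx)), mul_zero]
    positivity

theorem mul_invTail_le_cesR {f : ℝ → ℝ} {q : ℝ} (hq : 0 ≤ q) {m : ℝ≥0∞}
    (hm : m ≤ ∫⁻ t in Ioc 0 q, ENNReal.ofReal |f t|) {x : ℝ} (hx : ces f x ≠ ⊤) :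
    m.toReal * invTail q x ≤ cesR f x := by
  by_cases hqx : q < x
  · have hle : ENNReal.ofReal (1 / x) * m ≤ ces f x :=
      mul_le_mul_right (hm.trans (lintegral_mono_set (Ioc_subset_Ioc_right hqx.le))) _
    have hx0 : 0 ≤ x⁻¹ := inv_nonneg.2 (hq.trans hqx.le)
    simpa [cesR, invTail, indicator_of_mem (mem_Ioi.2 hqx), ENNReal.toReal_mul,
      ENNReal.toReal_ofReal hx0, mul_comm] using ENNReal.toReal_mono hx hle
  · rw [invTail, indicator_of_notMem (notMem_Ioi.2 (not_lt.1 hqx)), mul_zero]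
    exact cesR_nonneg f x

theorem ofReal_abs_tsum_of_support_subsingleton {f : ℕ → ℝ}
    (hf : (Function.support f).Subsingleton) :
    ENNReal.ofReal |∑' n, f n| = ∑' n, ENNReal.ofReal |f n| := by
  rcases hf.eq_empty_or_singleton with h | ⟨k, hk⟩
  · simp [Function.support_eq_empty_iff.1 h]
  · have hzero : ∀ n ≠ k, f n = 0 := fun n hn =>
      Function.notMem_support.1 fun h => hn (by simpa [hk] using h)
    rw [tsum_eq_single k hzero, tsum_eq_single k fun n hn => by simp [hzero n hn]]

theorem ces_tsum_of_disjoint {g : ℕ → ℝ → ℝ} (α : ℕ → ℝ) (hg : ∀ n, Measurable (g n))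
    (hdisj : ∀ m n, m ≠ n → ∀ x, g m x = 0 ∨ g n x = 0) (x : ℝ) :
    ces (fun y => ∑' n, α n * g n y) x = ∑' n, ENNReal.ofReal |α n| * ces (g n) x := by
  have hsupp : ∀ t, (Function.support fun n => α n * g n t).Subsingleton := by
    intro t m hm n hn
    by_contra hmn
    rcases hdisj m n hmn t with h | h
    · exact hm (by simp [h])
    · exact hn (by simp [h])
  have hterm : ∀ n t, ENNReal.ofReal |α n * g n t| =
      ENNReal.ofReal |α n| * ENNReal.ofReal |g n t| := fun n t => by
    rw [abs_mul, ENNReal.ofReal_mul (abs_nonneg _)]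
  simp only [ces, ofReal_abs_tsum_of_support_subsingleton (hsupp _), hterm]
  rw [lintegral_tsum fun n => ((hg n).abs.ennreal_ofReal.const_mul _).aemeasurable,
    ← ENNReal.tsum_mul_left]
  simp only [lintegral_const_mul' _ _ ENNReal.ofReal_ne_top, mul_left_comm]

theorem ces_tsum_of_disjoint_eq_ofReal {g : ℕ → ℝ → ℝ} {α : ℕ → ℝ} (hg : ∀ n, Measurable (g n))
    (hdisj : ∀ m n, m ≠ n → ∀ x, g m x = 0 ∨ g n x = 0) {x : ℝ} (hfin : ∀ n, ces (g n) x ≠ ⊤)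
    (hsum : Summable fun n => |α n| * cesR (g n) x) :
    ces (fun y => ∑' n, α n * g n y) x = ENNReal.ofReal (∑' n, |α n| * cesR (g n) x) := by
  rw [ces_tsum_of_disjoint α hg hdisj,
    ENNReal.ofReal_tsum_of_nonneg (f := fun n => |α n| * cesR (g n) x)
      (fun n => mul_nonneg (abs_nonneg _) (cesR_nonneg _ x)) hsum]
  simp only [ENNReal.ofReal_mul (abs_nonneg _), cesR, ENNReal.ofReal_toReal (hfin _)]

namespace BanachFunctionSpace

variable {I : Set ℝ} (X : BanachFunctionSpace I) {a a₀ : ℝ}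

theorem mem_invTail_of_le {lam mu : ℝ} (hlam : 0 ≤ lam) (h : lam ≤ mu)
    (hX : X.Mem (invTail lam)) : X.Mem (invTail mu) :=
  X.mem_of_le (invTail_nonneg (hlam.trans h)) (invTail_anti hlam h) hX

theorem norm_invTail_anti {lam mu : ℝ} (hlam : 0 ≤ lam) (h : lam ≤ mu)
    (hX : X.Mem (invTail lam)) : X.norm (invTail mu) ≤ X.norm (invTail lam) :=
  X.norm_le_of_le (invTail_nonneg (hlam.trans h)) (invTail_anti hlam h) hX

theorem mem_invTail_of_memCX {f : ℝ → ℝ} (hf : MemCX I X f) {q : ℝ} (hq : 0 ≤ q)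
    (hpos : 0 < ∫⁻ t in Ioc 0 q, ENNReal.ofReal |f t|) : X.Mem (invTail q) := by
  -- capped at `1` so that `m.toReal` stays positive when `∫ |f| = ∞`
  set m := min (∫⁻ t in Ioc 0 q, ENNReal.ofReal |f t|) 1
  have hm : 0 < m.toReal := ENNReal.toReal_pos (lt_min hpos one_pos).ne'
    (ne_top_of_le_ne_top ENNReal.one_ne_top (min_le_right _ _))
  refine X.ideal_mem _ _ ?_ (X.smul_mem m.toReal⁻¹ _ hf.2)
  filter_upwards [hf.1] with x hx
  rw [abs_of_nonneg (invTail_nonneg hq x), Pi.smul_apply, smul_eq_mul,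
    abs_of_nonneg (mul_nonneg (inv_nonneg.2 hm.le) (cesR_nonneg f x)), le_inv_mul_iff₀ hm]
  exact mul_invTail_le_cesR hq (min_le_left _ _) hx

theorem norm_invTail_pos {lam : ℝ} (hlam0 : 0 ≤ lam) (hlam : lam ∈ interior I)
    (hX : X.Mem (invTail lam)) : 0 < X.norm (invTail lam) := by
  set V := interior I ∩ Ioi lam
  have hVopen : IsOpen V := isOpen_interior.inter isOpen_Ioi
  obtain ⟨l, hl, hlI⟩ :=
    exists_Ico_subset_of_mem_nhds (isOpen_interior.mem_nhds hlam) ⟨lam + 1, by linarith⟩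
  have hV : volume V ≠ 0 := hVopen.measure_ne_zero volume
    ⟨(lam + l) / 2, hlI ⟨by linarith, by linarith⟩, show lam < (lam + l) / 2 by linarith⟩
  refine (X.norm_nonneg _).lt_of_ne fun h0 => hV ?_
  have hzero : ∀ᵐ x ∂(volume.restrict V), invTail lam x = 0 :=
    ae_restrict_of_ae_restrict_of_subset (inter_subset_left.trans interior_subset)
      (X.norm_eq_zero _ hX h0.symm)
  have hfalse : ∀ᵐ x ∂(volume.restrict V), False := by
    filter_upwards [hzero, ae_restrict_mem hVopen.measurableSet] with x hx hxV
    exact (invTail_pos hlam0 hxV.2).ne' hx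
  exact Measure.restrict_eq_zero.1 (ae_eq_bot.1 (eventually_false_iff_eq_bot.1 hfalse))

/-- `F_X` of the paper, frozen below `a` so that it is antitone on all of `ℝ`. -/
def tailNorm (a lam : ℝ) : ℝ := X.norm (invTail (max a lam))

theorem tailNorm_of_le {a lam : ℝ} (h : a ≤ lam) : X.tailNorm a lam = X.norm (invTail lam) := by
  rw [tailNorm, max_eq_right h]

theorem tailNorm_antitone {a : ℝ} (ha : 0 ≤ a) (hX : X.Mem (invTail a)) :
    Antitone (X.tailNorm a) := fun lam _ h =>
  X.norm_invTail_anti (ha.trans (le_max_left a lam)) (max_le_max le_rfl h)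
    (X.mem_invTail_of_le ha (le_max_left a lam) hX)

theorem exists_continuousAt_tailNorm (hI : Convex ℝ I) (hI0 : I ⊆ Ici 0)
    (hne : ∃ f : ℝ → ℝ, Measurable f ∧ MemCX I X f ∧ ¬ ∀ᵐ x ∂(volume.restrict I), f x = 0) :
    ∃ a a₀ : ℝ, 0 < a ∧ a < a₀ ∧ X.Mem (invTail a) ∧ 0 < X.norm (invTail a₀) ∧
      ContinuousAt (X.tailNorm a) a₀ := by
  obtain ⟨f, hf, hfX, hfne⟩ := hne
  obtain ⟨a, haI, hpos⟩ := exists_mem_interior_lintegral_Ioc_pos hI hI0 hf hfne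
  have ha : 0 < a := by simpa using interior_mono hI0 haI
  have hXa := X.mem_invTail_of_memCX hfX ha.le hpos
  obtain ⟨a₀, ha₀I, haa₀, hcont⟩ :=
    (X.tailNorm_antitone ha.le hXa).exists_continuousAt_gt_mem_interior haI
  exact ⟨a, a₀, ha, haa₀, hXa, X.norm_invTail_pos (ha.trans haa₀).le ha₀I
    (X.mem_invTail_of_le ha.le haa₀.le hXa), hcont⟩

theorem tendsto_norm_invTail_div (hcont : ContinuousAt (X.tailNorm a) a₀) (haa₀ : a ≤ a₀)
    (hXa₀ : 0 < X.norm (invTail a₀)) {s : ℕ → ℝ} (hsa : ∀ n, a ≤ s n)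
    (hslim : Tendsto s atTop (nhds a₀)) :
    Tendsto (fun n => X.norm (invTail a₀) / X.norm (invTail (s n))) atTop (nhds 1) := by
  have hF := (hcont.tendsto.comp hslim).congr fun n => X.tailNorm_of_le (hsa n)
  rw [X.tailNorm_of_le haa₀] at hF
  rw [← div_self hXa₀.ne']
  exact tendsto_const_nhds.div hF hXa₀.ne'

theorem mem_invTail_and_norm_le (ha : 0 ≤ a) (hXa : X.Mem (invTail a)) {lam : ℝ}
    (hlam : lam ∈ Icc a a₀) : X.Mem (invTail lam) ∧ X.norm (invTail a₀) ≤ X.norm (invTail lam) :=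
  ⟨X.mem_invTail_of_le ha hlam.1 hXa,
    X.norm_invTail_anti (ha.trans hlam.1) hlam.2 (X.mem_invTail_of_le ha hlam.1 hXa)⟩

def normalizedIndicator (u v : ℝ) : ℝ → ℝ :=
  (X.norm (cesR ((Ioc u v).indicator 1)))⁻¹ • (Ioc u v).indicator 1

section NormalizedIndicator

variable {u v : ℝ}

theorem measurable_normalizedIndicator : Measurable (X.normalizedIndicator u v) :=
  (measurable_const.indicator measurableSet_Ioc).const_smul _

theorem normalizedIndicator_of_notMem {x : ℝ} (hx : x ∉ Ioc u v) :
    X.normalizedIndicator u v x = 0 := by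
  simp [normalizedIndicator, indicator_of_notMem hx]

theorem normalizedIndicator_disjoint {s : ℕ → ℝ} (hs : Monotone s) (m n : ℕ) (hmn : m ≠ n)
    (x : ℝ) : X.normalizedIndicator (s m) (s (m + 1)) x = 0 ∨
      X.normalizedIndicator (s n) (s (n + 1)) x = 0 := by
  by_cases hx : x ∈ Ioc (s m) (s (m + 1))
  · exact Or.inr (X.normalizedIndicator_of_notMem
      (disjoint_left.1 (hs.pairwise_disjoint_on_Ioc_succ hmn) hx))
  · exact Or.inl (X.normalizedIndicator_of_notMem hx)

theorem ces_normalizedIndicator_ne_top (hu : 0 < u) (x : ℝ) :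
    ces (X.normalizedIndicator u v) x ≠ ⊤ := by
  simp [normalizedIndicator, ces_smul, ces_indicator_Ioc hu, ENNReal.mul_eq_top]

theorem cesR_normalizedIndicator :
    cesR (X.normalizedIndicator u v) =
      (X.norm (cesR ((Ioc u v).indicator 1)))⁻¹ • cesR ((Ioc u v).indicator 1) := by
  rw [normalizedIndicator, cesR_smul, abs_inv, abs_of_nonneg (X.norm_nonneg _)]

theorem mem_cesR_indicator_Ioc (hu : 0 < u) (huv : u < v) (hXu : X.Mem (invTail u)) :
    X.Mem (cesR ((Ioc u v).indicator 1)) :=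
  X.mem_of_le (cesR_nonneg _) (cesR_indicator_Ioc_le hu huv.le)
    (X.smul_mem _ _ hXu)

theorem sub_mul_norm_invTail_le_norm_cesR (hu : 0 < u) (huv : u < v) (hXu : X.Mem (invTail u)) :
    (v - u) * X.norm (invTail v) ≤ X.norm (cesR ((Ioc u v).indicator 1)) :=
  X.mul_norm_le_norm_of_le (by linarith) (invTail_nonneg (hu.trans huv).le)
    (le_cesR_indicator_Ioc hu huv.le) (X.mem_cesR_indicator_Ioc hu huv hXu)

theorem memCX_normalizedIndicator (hu : 0 < u) (huv : u < v) (hXu : X.Mem (invTail u)) :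
    MemCX I X (X.normalizedIndicator u v) :=
  ⟨Eventually.of_forall (X.ces_normalizedIndicator_ne_top hu),
    X.cesR_normalizedIndicator ▸ X.smul_mem _ _ (X.mem_cesR_indicator_Ioc hu huv hXu)⟩

theorem norm_cesR_indicator_Ioc_pos (hu : 0 < u) (huv : u < v) (hXu : X.Mem (invTail u))
    (hXv : 0 < X.norm (invTail v)) : 0 < X.norm (cesR ((Ioc u v).indicator 1)) :=
  (mul_pos (sub_pos.2 huv) hXv).trans_le (X.sub_mul_norm_invTail_le_norm_cesR hu huv hXu)

theorem norm_cesR_normalizedIndicator (hu : 0 < u) (huv : u < v) (hXu : X.Mem (invTail u))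
    (hXv : 0 < X.norm (invTail v)) : X.norm (cesR (X.normalizedIndicator u v)) = 1 := by
  have hN := X.norm_cesR_indicator_Ioc_pos hu huv hXu hXv
  rw [cesR_normalizedIndicator, X.norm_smul, abs_inv, abs_of_pos hN, inv_mul_cancel₀ hN.ne']

theorem cesR_normalizedIndicator_le (hu : 0 < u) (huv : u < v) (hXu : X.Mem (invTail u))
    (hXv : 0 < X.norm (invTail v)) (x : ℝ) :
    cesR (X.normalizedIndicator u v) x ≤ invTail u x / X.norm (invTail v) := by
  have hN := X.norm_cesR_indicator_Ioc_pos hu huv hXu hXv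
  have hle := X.sub_mul_norm_invTail_le_norm_cesR hu huv hXu
  have hw := invTail_nonneg hu.le x
  rw [cesR_normalizedIndicator, Pi.smul_apply, smul_eq_mul]
  calc _ ≤ (X.norm (cesR ((Ioc u v).indicator 1)))⁻¹ * ((v - u) * invTail u x) := by
        gcongr; exact cesR_indicator_Ioc_le hu huv.le x
    _ = (v - u) / X.norm (cesR ((Ioc u v).indicator 1)) * invTail u x := by ring
    _ ≤ 1 / X.norm (invTail v) * invTail u x := by
        refine mul_le_mul_of_nonneg_right ?_ hw
        rw [div_le_div_iff₀ hN hXv]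
        linarith
    _ = _ := by ring

theorem le_cesR_normalizedIndicator (hu : 0 < u) (huv : u < v) (hXu : X.Mem (invTail u))
    (hXv : 0 < X.norm (invTail v)) (x : ℝ) :
    invTail v x / X.norm (invTail u) ≤ cesR (X.normalizedIndicator u v) x := by
  have hN := X.norm_cesR_indicator_Ioc_pos hu huv hXu hXv
  have hXu' : 0 < X.norm (invTail u) := hXv.trans_le (X.norm_invTail_anti hu.le huv.le hXu)
  have hle : X.norm (cesR ((Ioc u v).indicator 1)) ≤ (v - u) * X.norm (invTail u) :=
    X.norm_le_mul_norm_of_le (by linarith) (cesR_nonneg _)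
      (cesR_indicator_Ioc_le hu huv.le) hXu
  have hw := invTail_nonneg (hu.trans huv).le x
  rw [cesR_normalizedIndicator, Pi.smul_apply, smul_eq_mul]
  calc _ = 1 / X.norm (invTail u) * invTail v x := by ring
    _ ≤ (v - u) / X.norm (cesR ((Ioc u v).indicator 1)) * invTail v x := by
        refine mul_le_mul_of_nonneg_right ?_ hw
        rw [div_le_div_iff₀ hXu' hN]
        linarith
    _ = (X.norm (cesR ((Ioc u v).indicator 1)))⁻¹ * ((v - u) * invTail v x) := by ring
    _ ≤ _ := by gcongr; exact le_cesR_indicator_Ioc hu huv.le x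

theorem cesR_normalizedIndicator_le_of_mem_Ioo (ha : 0 < a) (hXa : X.Mem (invTail a))
    (hXa₀ : 0 < X.norm (invTail a₀)) (hu : u ∈ Ioo a a₀) (hv : v ∈ Ioo a a₀)
    (huv : u < v) (x : ℝ) :
    cesR (X.normalizedIndicator u v) x ≤ ((X.norm (invTail a₀))⁻¹ • invTail a) x := by
  have hXv := (X.mem_invTail_and_norm_le ha.le hXa (Ioo_subset_Icc_self hv)).2
  rw [Pi.smul_apply, smul_eq_mul, inv_mul_eq_div]
  exact (X.cesR_normalizedIndicator_le (ha.trans hu.1) huv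
    (X.mem_invTail_and_norm_le ha.le hXa (Ioo_subset_Icc_self hu)).1 (hXa₀.trans_le hXv) x).trans
    (div_le_div₀ (invTail_nonneg ha.le x) (invTail_anti ha.le hu.1.le x) hXa₀ hXv)

theorem le_cesR_normalizedIndicator_of_mem_Ioo (ha : 0 < a) (hXa : X.Mem (invTail a))
    (hXa₀ : 0 < X.norm (invTail a₀)) (hu : u ∈ Ioo a a₀) (hv : v ∈ Ioo a a₀)
    (huv : u < v) (x : ℝ) :
    X.norm (invTail a₀) / X.norm (invTail u) * ((X.norm (invTail a₀))⁻¹ • invTail a₀) x ≤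
      cesR (X.normalizedIndicator u v) x := by
  obtain ⟨hXu, hXu'⟩ := X.mem_invTail_and_norm_le ha.le hXa (Ioo_subset_Icc_self hu)
  have hXv := (X.mem_invTail_and_norm_le ha.le hXa (Ioo_subset_Icc_self hv)).2
  have hXu0 := hXa₀.trans_le hXu'
  calc _ = invTail a₀ x / X.norm (invTail u) := by
        rw [Pi.smul_apply, smul_eq_mul]; field_simp
    _ ≤ invTail v x / X.norm (invTail u) :=
        div_le_div_of_nonneg_right (invTail_anti (ha.trans hv.1).le hv.2.le x) hXu0.le
    _ ≤ _ := X.le_cesR_normalizedIndicator (ha.trans hu.1) huv hXu (hXa₀.trans_le hXv) x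

end NormalizedIndicator

theorem memCX_tsum_and_bounds_of_disjoint {g : ℕ → ℝ → ℝ} {δ : ℕ → ℝ} {u W : ℝ → ℝ}
    (hg : ∀ n, Measurable (g n)) (hdisj : ∀ m n, m ≠ n → ∀ x, g m x = 0 ∨ g n x = 0)
    (hfin : ∀ n x, ces (g n) x ≠ ⊤) (hgX : ∀ n, X.Mem (cesR (g n))) (hW : X.Mem W)
    (hgW : ∀ n x, cesR (g n) x ≤ W x) (hu0 : ∀ x, 0 ≤ u x) (hδ0 : ∀ n, 0 ≤ δ n)
    (hδ1 : ∀ n, δ n ≤ 1) (hgu : ∀ n x, δ n * u x ≤ cesR (g n) x) {α : ℕ → ℝ}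
    (hα : Summable fun n => |α n|) :
    MemCX I X (fun x => ∑' n, α n * g n x) ∧
      (∑' n, δ n * |α n|) * X.norm u ≤ X.norm (cesR fun x => ∑' n, α n * g n x) ∧
      X.norm (cesR fun x => ∑' n, α n * g n x) ≤ ∑' n, |α n| * X.norm (cesR (g n)) := by
  have hsum : ∀ x, Summable fun n => |α n| * cesR (g n) x := fun x =>
    summable_mul_of_le (fun n => abs_nonneg _) hα (fun n => cesR_nonneg _ x) fun n => hgW n x
  have hces : ∀ x, ces (fun y => ∑' n, α n * g n y) x =
      ENNReal.ofReal (∑' n, |α n| * cesR (g n) x) := fun x =>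
    ces_tsum_of_disjoint_eq_ofReal hg hdisj (fun n => hfin n x) (hsum x)
  have hcesR : cesR (fun y => ∑' n, α n * g n y) = fun x => ∑' n, |α n| * cesR (g n) x :=
    funext fun x => by
      rw [cesR, hces, ENNReal.toReal_ofReal
        (tsum_nonneg fun n => mul_nonneg (abs_nonneg _) (cesR_nonneg _ x))]
  have hmem := X.mem_tsum_of_le (fun n => abs_nonneg _) hα (fun n => cesR_nonneg _) hgW hW
  refine ⟨⟨Eventually.of_forall fun x => by simp [hces], hcesR ▸ hmem⟩, ?_, ?_⟩
  · rw [hcesR]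
    exact X.mul_norm_le_norm_tsum (fun n => abs_nonneg _) hδ0
      (hα.of_nonneg_of_le (fun n => mul_nonneg (hδ0 n) (abs_nonneg _))
        fun n => mul_le_of_le_one_left (abs_nonneg _) (hδ1 n)) hu0 hgu hsum hmem
  · rw [hcesR]
    exact X.norm_tsum_le (fun n => abs_nonneg _) hα (fun n => cesR_nonneg _) hgW hgX hW

end BanachFunctionSpace

/-- Theorem 4.5: every nontrivial Cesàro space `CX` contains an order asymptotically
isometric copy of `ℓ¹`. -/
theorem cesaro_asymptotically_isometric_l1 (I : Set ℝ)
    (hI : I = Set.Icc 0 1 ∨ I = Set.Ici 0) (X : BanachFunctionSpace I)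
    (hne : ∃ f : ℝ → ℝ, Measurable f ∧ MemCX I X f ∧
        ¬ (∀ᵐ x ∂(volume.restrict I), f x = 0)) :
    ∃ (g : ℕ → ℝ → ℝ) (ε : ℕ → ℝ),
      (∀ n, MemCX I X (g n) ∧ X.norm (cesR (g n)) = 1) ∧
      (∀ m n, m ≠ n → ∀ x, g m x = 0 ∨ g n x = 0) ∧
      (∀ n, ε n ∈ Set.Ioo (0:ℝ) 1) ∧ Tendsto ε atTop (nhds 0) ∧
      ∀ α : ℕ → ℝ, Summable (fun n => |α n|) →
        MemCX I X (fun x => ∑' n, α n * g n x) ∧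
        (∑' n, (1 - ε n) * |α n|) ≤ X.norm (cesR fun x => ∑' n, α n * g n x) ∧
        X.norm (cesR fun x => ∑' n, α n * g n x) ≤ ∑' n, |α n| := by
  obtain ⟨a, a₀, ha, haa₀, hXa, hXa₀, hcont⟩ := X.exists_continuousAt_tailNorm
    (by rcases hI with rfl | rfl <;> [exact convex_Icc 0 1; exact convex_Ici 0])
    (by rcases hI with rfl | rfl <;> [exact Icc_subset_Ici_self; exact subset_rfl]) hne
  obtain ⟨s, hs, hsa, hslim⟩ := exists_seq_strictMono_tendsto' haa₀
  have hXs n := X.mem_invTail_and_norm_le ha.le hXa (Ioo_subset_Icc_self (hsa n))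
  obtain ⟨ε, hε, hε0, hεδ⟩ :=
    exists_tendsto_zero_one_sub_le (fun n => div_pos hXa₀ (hXa₀.trans_le (hXs n).2))
      (X.tendsto_norm_invTail_div hcont haa₀.le hXa₀ (fun n => (hsa n).1.le) hslim)
  have hmem n := X.memCX_normalizedIndicator (ha.trans (hsa n).1) (hs n.lt_succ_self) (hXs n).1
  have hnorm n := X.norm_cesR_normalizedIndicator (ha.trans (hsa n).1) (hs n.lt_succ_self)
    (hXs n).1 (hXa₀.trans_le (hXs (n + 1)).2)
  have hu0 x : 0 ≤ ((X.norm (invTail a₀))⁻¹ • invTail a₀) x :=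
    mul_nonneg (inv_nonneg.2 hXa₀.le) (invTail_nonneg (ha.trans haa₀).le x)
  refine ⟨_, ε, fun n => ⟨hmem n, hnorm n⟩, X.normalizedIndicator_disjoint hs.monotone, hε, hε0,
    fun α hα => ?_⟩
  obtain ⟨hmemα, hlow, hup⟩ := X.memCX_tsum_and_bounds_of_disjoint (fun n => X.measurable_normalizedIndicator)
    (X.normalizedIndicator_disjoint hs.monotone)
    (fun n => X.ces_normalizedIndicator_ne_top (ha.trans (hsa n).1)) (fun n => (hmem n).2)
    (X.smul_mem _ _ hXa)
    (fun n => X.cesR_normalizedIndicator_le_of_mem_Ioo ha hXa hXa₀ (hsa n) (hsa _)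
      (hs n.lt_succ_self))
    hu0 (fun n => by linarith [(hε n).2]) (fun n => by linarith [(hε n).1])
    (fun n x => (mul_le_mul_of_nonneg_right (hεδ n) (hu0 x)).trans
      (X.le_cesR_normalizedIndicator_of_mem_Ioo ha hXa hXa₀ (hsa n) (hsa _) (hs n.lt_succ_self) x))
    hα
  simp only [hnorm, mul_one, X.norm_smul, abs_inv, abs_of_pos hXa₀, inv_mul_cancel₀ hXa₀.ne']
    at hlow hup
  exact ⟨hmemα, hlow, hup⟩
end
end
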